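/- arXiv:2208.10680 — 14 statements merged into one kernel-verified Lean document; each statement's English description precedes it below -/
import Mathlib

section
/- Let H and K be real Hilbert spaces and G : H → K a bounded linear operator with adjoint G*. Let V := {(z, G z) : z ∈ H} be the graph of G and V^⊥ its orthogonal complement in H × K. Then for every (z, w) ∈ H × K, if v ∈ K satisfies v + G(G* v) = G z − w, then the orthogonal projection of (z, w) onto V^⊥ equals (G* v, −v). -/
/-!
`(G* v, -v)` is orthogonal to the graph of `G`, and the hypothesis on `v` says exactly that
`(z, w) - (G* v, -v) = (z - G* v, G (z - G* v))` lies on the graph; this is the orthogonal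
decomposition of `(z, w)` along `V ⊕ Vᗮ`.
-/

open scoped RealInnerProductSpace

/-- `H × K` carries the product inner product through `WithLp 2 (H × K)`. -/
noncomputable def graphSubmodule {H K : Type*} [NormedAddCommGroup H] [InnerProductSpace ℝ H]
    [NormedAddCommGroup K] [InnerProductSpace ℝ K] (G : H →L[ℝ] K) :
    Submodule ℝ (WithLp 2 (H × K)) :=
  (LinearMap.graph (G : H →ₗ[ℝ] K)).comap (WithLp.linearEquiv 2 ℝ (H × K)).toLinearMap

instance graphSubmodule.instCompleteSpace {H K : Type*} [NormedAddCommGroup H]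
    [InnerProductSpace ℝ H] [CompleteSpace H] [NormedAddCommGroup K] [InnerProductSpace ℝ K]
    [CompleteSpace K] (G : H →L[ℝ] K) : CompleteSpace (graphSubmodule G) := by
  have hclosed : IsClosed (graphSubmodule G : Set (WithLp 2 (H × K))) := by
    have hset : (graphSubmodule G : Set (WithLp 2 (H × K))) =
        {p : WithLp 2 (H × K) | G ((WithLp.equiv 2 (H × K)) p).1 =
          ((WithLp.equiv 2 (H × K)) p).2} := by
      ext p
      simp only [graphSubmodule, Submodule.mem_comap, SetLike.mem_coe, LinearMap.mem_graph_iff,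
        Set.mem_setOf_eq, ContinuousLinearMap.coe_coe]
      exact eq_comm
    rw [hset]
    have hcont : Continuous fun p : WithLp 2 (H × K) => (WithLp.equiv 2 (H × K)) p :=
      (WithLp.prodContinuousLinearEquiv 2 ℝ H K).continuous
    exact isClosed_eq (G.continuous.comp (continuous_fst.comp hcont)) (continuous_snd.comp hcont)
  exact hclosed.completeSpace_coe

section Graph

variable {H K : Type*} [NormedAddCommGroup H] [InnerProductSpace ℝ H] [NormedAddCommGroup K]
  [InnerProductSpace ℝ K]

theorem mem_graphSubmodule_iff (G : H →L[ℝ] K) (p : WithLp 2 (H × K)) :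
    p ∈ graphSubmodule G ↔ p.snd = G p.fst :=
  Iff.rfl

theorem toLp_adjoint_neg_mem_orthogonal_graphSubmodule [CompleteSpace H] [CompleteSpace K]
    (G : H →L[ℝ] K) (v : K) :
    (WithLp.equiv 2 (H × K)).symm (ContinuousLinearMap.adjoint G v, -v) ∈ (graphSubmodule G)ᗮ := by
  intro p hp
  rw [mem_graphSubmodule_iff] at hp
  simp [WithLp.prod_inner_apply, hp, ContinuousLinearMap.adjoint_inner_right]

end Graph

/-- Let `G : H → K` be bounded linear with adjoint `G*`, let
`V = {(z, G z) : z ∈ H}` be its graph in `H × K` and `Vᗮ` its orthogonal complement.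
If `v + G(G* v) = G z − w`, then the orthogonal projection of `(z, w)` onto `Vᗮ` equals
`(G* v, −v)`. -/
theorem orthogonalProjection_graph_orthogonal_eq {H K : Type*} [NormedAddCommGroup H]
    [InnerProductSpace ℝ H] [CompleteSpace H] [NormedAddCommGroup K] [InnerProductSpace ℝ K]
    [CompleteSpace K] (G : H →L[ℝ] K) (z : H) (w : K) (v : K)
    (hv : v + G (ContinuousLinearMap.adjoint G v) = G z - w) :
    (Submodule.orthogonalProjectionOnto (graphSubmodule G)ᗮ ((WithLp.equiv 2 (H × K)).symm (z, w)) :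
      WithLp 2 (H × K)) = (WithLp.equiv 2 (H × K)).symm (ContinuousLinearMap.adjoint G v, -v) := by
  set y := ContinuousLinearMap.adjoint G v
  have hgraph : (WithLp.equiv 2 (H × K)).symm (z - y, w + v) ∈ graphSubmodule G := by
    rw [mem_graphSubmodule_iff]
    simp only [WithLp.equiv_symm_apply, WithLp.toLp_fst, WithLp.toLp_snd, map_sub]
    linear_combination (norm := module) hv
  rw [← Submodule.starProjection_apply]
  refine Submodule.eq_starProjection_of_mem_orthogonal'
    (toLp_adjoint_neg_mem_orthogonal_graphSubmodule G v)
    (Submodule.le_orthogonal_orthogonal _ hgraph) ?_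
  rw [WithLp.ext_iff]
  simp
end

section
/- Let H be a real Hilbert space, T : H → Set H a monotone set-valued operator with nonempty domain, and D : H → H a monotone, Fréchet differentiable map whose derivative D' is m-Lipschitz continuous in operator norm (m ≥ 0). Let (s^k) and (u^k) be bounded sequences in H and (ρ^k) a bounded sequence of strictly positive reals. If a sequence (x^k) in H satisfies, for each k, the resolvent inclusion s^k − x^k ∈ ρ^k (T(x^k) + D_{(u^k)}(x^k)), i.e. x^k = J_{ρ^k (T + D_{(u^k)})}(s^k), then (x^k) is bounded. -/
/-!
Fix a point `x₀` of the domain of `T` and some `t₀ ∈ T x₀`. Since `D` is monotone, every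
derivative `D' u` is positive semidefinite, so the linearization `D_{(u)}` is monotone and so is
`T + D_{(u)}`. The resolvent of a monotone operator satisfies
`‖x - x₀‖ ≤ ‖s - ρ v₀ - x₀‖` for any `v₀ ∈ (T + D_{(u)}) x₀`, and `v₀ = t₀ + D_{(u)}(x₀)` stays
bounded when `u` does, because the Lipschitz derivative `D'` and hence `D` are bounded on balls.
-/

open scoped RealInnerProductSpace

section InnerProductSpace

variable {H : Type*} [NormedAddCommGroup H] [InnerProductSpace ℝ H]

lemma inner_fderiv_apply_self_nonneg_of_monotone {D : H → H} {A : H →L[ℝ] H} {v : H}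
    (hDmono : ∀ x y, 0 ≤ ⟪x - y, D x - D y⟫) (hD : HasFDerivAt D A v) (h : H) :
    0 ≤ ⟪h, A h⟫ := by
  have hline : HasDerivAt (fun t : ℝ => v + t • h) h 0 := by
    simpa using ((hasDerivAt_id (0 : ℝ)).smul_const h).const_add v
  have hderiv : HasDerivAt (fun t : ℝ => ⟪h, D (v + t • h)⟫) ⟪h, A h⟫ 0 := by
    have hcomp : HasDerivAt (fun t : ℝ => D (v + t • h)) (A h) 0 :=
      hD.comp_hasDerivAt_of_eq 0 hline (by simp)
    simpa using (hasDerivAt_const (0 : ℝ) h).inner ℝ hcomp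
  refine hderiv.nonneg_of_monotone fun a b hab => ?_
  rcases hab.eq_or_lt with rfl | hlt
  · rfl
  have hmono := hDmono (v + b • h) (v + a • h)
  rw [show v + b • h - (v + a • h) = (b - a) • h by module, real_inner_smul_left,
    inner_sub_right] at hmono
  linarith [nonneg_of_mul_nonneg_right hmono (sub_pos.2 hlt)]

lemma monotone_linearization_of_inner_apply_self_nonneg {A : H →L[ℝ] H}
    (hA : ∀ h, 0 ≤ ⟪h, A h⟫) (c u : H) :
    ∀ x y, 0 ≤ ⟪x - y, (c + A (x - u)) - (c + A (y - u))⟫ := by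
  intro x y
  simpa [← map_sub] using hA (x - y)

lemma norm_sub_le_of_inner_nonneg {x y z : H} (h : 0 ≤ ⟪x - y, z - x⟫) : ‖x - y‖ ≤ ‖z - y‖ := by
  have hsq : ‖x - y‖ * ‖x - y‖ ≤ ‖x - y‖ * ‖z - y‖ := by
    calc ‖x - y‖ * ‖x - y‖ = ⟪x - y, x - y⟫ := (real_inner_self_eq_norm_mul_norm _).symm
      _ ≤ ⟪x - y, x - y⟫ + ⟪x - y, z - x⟫ := le_add_of_nonneg_right h
      _ = ⟪x - y, z - y⟫ := by rw [← inner_add_right, sub_add_sub_cancel']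
      _ ≤ ‖x - y‖ * ‖z - y‖ := real_inner_le_norm _ _
  rcases (norm_nonneg (x - y)).eq_or_lt with h0 | hpos
  · rw [← h0]; exact norm_nonneg _
  · exact le_of_mul_le_mul_left hsq hpos

lemma norm_sub_le_of_resolvent {T : H → Set H}
    (hT : ∀ x y u v, u ∈ T x → v ∈ T y → 0 ≤ ⟪x - y, u - v⟫)
    {F : H → H} (hF : ∀ x y, 0 ≤ ⟪x - y, F x - F y⟫) {ρ : ℝ} (hρ : 0 ≤ ρ) {s x y t t₀ : H}
    (ht : t ∈ T x) (ht₀ : t₀ ∈ T y) (hs : s - x = ρ • (t + F x)) :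
    ‖x - y‖ ≤ ‖s - ρ • (t₀ + F y) - y‖ := by
  refine norm_sub_le_of_inner_nonneg ?_
  have hres : s - ρ • (t₀ + F y) - x = ρ • ((t - t₀) + (F x - F y)) := by
    rw [sub_right_comm, hs]; module
  rw [hres, real_inner_smul_right, inner_add_right]
  exact mul_nonneg hρ (add_nonneg (hT _ _ _ _ ht ht₀) (hF x y))

end InnerProductSpace

lemma norm_le_of_norm_fderiv_le {E F : Type*} [NormedAddCommGroup E] [NormedSpace ℝ E]
    [NormedAddCommGroup F] [NormedSpace ℝ F] {f : E → F} {f' : E → E →L[ℝ] F}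
    (hf : ∀ x, HasFDerivAt f (f' x) x) {r C : ℝ} (hf' : ∀ z, ‖z‖ ≤ r → ‖f' z‖ ≤ C)
    {z : E} (hz : ‖z‖ ≤ r) : ‖f z‖ ≤ ‖f 0‖ + C * ‖z‖ := by
  have hball : ∀ y ∈ Metric.closedBall (0 : E) r, ‖y‖ ≤ r := fun y hy => by
    simpa using hy
  have hmvt := (convex_closedBall (0 : E) r).norm_image_sub_le_of_norm_hasFDerivWithin_le
    (fun y _ => (hf y).hasFDerivWithinAt) (fun y hy => hf' y (hball y hy))
    (Metric.mem_closedBall_self ((norm_nonneg z).trans hz)) (by simpa using hz)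
  rw [sub_zero] at hmvt
  linarith [norm_le_insert' (f z) (f 0)]

/-- Let `T` be a monotone set-valued operator with nonempty domain and `D`
a monotone Fréchet differentiable map with `m`-Lipschitz derivative. If `(sᵏ)`, `(uᵏ)` are
bounded, `(ρᵏ)` is bounded and strictly positive, and `xᵏ = J_{ρᵏ(T + D_{(uᵏ)})}(sᵏ)` for all
`k`, then `(xᵏ)` is bounded. -/
theorem bounded_of_resolvent_linearization {H : Type*} [NormedAddCommGroup H]
    [InnerProductSpace ℝ H]
    (T : H → Set H)
    (hT : ∀ x y u v, u ∈ T x → v ∈ T y → 0 ≤ ⟪x - y, u - v⟫)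
    (hdom : ∃ x, (T x).Nonempty)
    (D : H → H) (D' : H → H →L[ℝ] H) (hD : ∀ x, HasFDerivAt D (D' x) x)
    (hDmono : ∀ x y, 0 ≤ ⟪x - y, D x - D y⟫)
    (m : ℝ) (hm : 0 ≤ m) (hlip : ∀ x y, ‖D' x - D' y‖ ≤ m * ‖x - y‖)
    (s u : ℕ → H) (ρ : ℕ → ℝ)
    (hs : ∃ M, ∀ k, ‖s k‖ ≤ M) (hu : ∃ M, ∀ k, ‖u k‖ ≤ M)
    (hρpos : ∀ k, 0 < ρ k) (hρbd : ∃ R, ∀ k, ρ k ≤ R)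
    (x : ℕ → H)
    (hx : ∀ k, ∃ t ∈ T (x k), s k - x k = ρ k • (t + (D (u k) + D' (u k) (x k - u k)))) :
    ∃ M, ∀ k, ‖x k‖ ≤ M := by
  obtain ⟨x₀, t₀, ht₀⟩ := hdom
  obtain ⟨Ms, hMs⟩ := hs
  obtain ⟨Mu, hMu⟩ := hu
  obtain ⟨R, hR⟩ := hρbd
  set CA := ‖D' 0‖ + m * Mu
  have hD'bd : ∀ z, ‖z‖ ≤ Mu → ‖D' z‖ ≤ CA := fun z hz => by
    have hz0 := hlip z 0
    rw [sub_zero] at hz0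
    linarith [norm_le_insert' (D' z) (D' 0), mul_le_mul_of_nonneg_left hz hm]
  set W := ‖t₀‖ + (‖D 0‖ + CA * Mu + CA * (‖x₀‖ + Mu))
  have hW : ∀ k, ‖t₀ + (D (u k) + D' (u k) (x₀ - u k))‖ ≤ W := fun k => by
    have hDu := norm_le_of_norm_fderiv_le hD hD'bd (hMu k)
    have hD'u := (D' (u k)).le_opNorm (x₀ - u k)
    have hCA : 0 ≤ CA := (norm_nonneg _).trans (hD'bd _ (hMu k))
    grw [norm_add_le, norm_add_le, hDu, hD'u, hD'bd _ (hMu k), norm_sub_le, hMu k]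
  refine ⟨Ms + R * W + 2 * ‖x₀‖, fun k => ?_⟩
  obtain ⟨t, ht, hsk⟩ := hx k
  have hlin := monotone_linearization_of_inner_apply_self_nonneg
    (inner_fderiv_apply_self_nonneg_of_monotone hDmono (hD (u k))) (D (u k)) (u k)
  have hres := norm_sub_le_of_resolvent hT hlin (hρpos k).le ht ht₀ hsk
  have hρW : ρ k * ‖t₀ + (D (u k) + D' (u k) (x₀ - u k))‖ ≤ R * W :=
    mul_le_mul (hR k) (hW k) (norm_nonneg _) ((hρpos k).le.trans (hR k))
  calc ‖x k‖ ≤ ‖x₀‖ + ‖x k - x₀‖ := norm_le_insert' _ _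
    _ ≤ ‖x₀‖ + (‖s k‖ + ρ k * ‖t₀ + (D (u k) + D' (u k) (x₀ - u k))‖ + ‖x₀‖) := by
      grw [hres, norm_sub_le, norm_sub_le, norm_smul, Real.norm_of_nonneg (hρpos k).le]
    _ ≤ Ms + R * W + 2 * ‖x₀‖ := by linarith [hMs k]
end

section
/- Let H be a real Hilbert space, S ⊂ H a nonempty closed convex set, and 0 < τ̲ < τ̄ < 2. Let (p^k) be a sequence in H and, for each k, let φ_k(p) = ⟪g_k, p⟫ + c_k be an affine functional (g_k ∈ H, c_k ∈ ℝ) such that φ_k(p) ≤ 0 for all p ∈ S, and suppose that for each k: if φ_k(p^k) > 0 then p^{k+1} = p^k − τ_k (φ_k(p^k)/‖g_k‖²) g_k for some τ_k ∈ [τ̲, τ̄], and otherwise p^{k+1} = p^k. Then the sequence (p^k) is bounded. -/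
/-!
Every iterate moves by a relaxed projection onto a half-space containing `S`, and for a
relaxation factor in `[0, 2]` such a step does not increase the distance to any point of that
half-space. Hence the distances from the iterates to a fixed point of `S` decrease, so the
iterates stay in a ball.
-/

open scoped RealInnerProductSpace

section RelaxedProjection

variable {H : Type*} [NormedAddCommGroup H] [InnerProductSpace ℝ H]

theorem norm_sub_relaxed_halfspace_step_le {g x q : H} {c τ : ℝ} (hτ0 : 0 ≤ τ) (hτ2 : τ ≤ 2)
    (hx : 0 ≤ ⟪g, x⟫ + c) (hq : ⟪g, q⟫ + c ≤ 0) :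
    ‖x - ((τ * (⟪g, x⟫ + c)) / ‖g‖ ^ 2) • g - q‖ ≤ ‖x - q‖ := by
  rcases eq_or_ne g 0 with rfl | hg
  · simp -- the step length `τ * φ / 0` is `0`
  set φ := ⟪g, x⟫ + c
  set t := τ * φ / ‖g‖ ^ 2
  have hg2 : 0 < ‖g‖ ^ 2 := by positivity
  have ht : 0 ≤ t := by positivity
  have htg : t * ‖g‖ ^ 2 = τ * φ := div_mul_cancel₀ _ hg2.ne'
  have hφ : φ ≤ ⟪g, x - q⟫ := by rw [inner_sub_right]; linarith
  have hexpand : ‖x - t • g - q‖ ^ 2 = ‖x - q‖ ^ 2 - 2 * t * ⟪g, x - q⟫ + t * (τ * φ) := by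
    rw [sub_right_comm, norm_sub_sq_real, real_inner_smul_right, norm_smul, mul_pow,
      Real.norm_of_nonneg ht, real_inner_comm, ← htg]
    ring
  have hdecrease : ‖x - t • g - q‖ ^ 2 ≤ ‖x - q‖ ^ 2 - t * φ * (2 - τ) := by
    rw [hexpand]
    nlinarith [mul_le_mul_of_nonneg_left hφ ht]
  have hgain : 0 ≤ t * φ * (2 - τ) := by
    have : 0 ≤ 2 - τ := by linarith
    positivity
  exact (sq_le_sq₀ (norm_nonneg _) (norm_nonneg _)).1 (by linarith)

end RelaxedProjection

theorem exists_forall_norm_le_of_antitone_norm_sub {E : Type*} [SeminormedAddCommGroup E]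
    {p : ℕ → E} {q : E} (h : Antitone fun k => ‖p k - q‖) : ∃ M, ∀ k, ‖p k‖ ≤ M :=
  ⟨‖p 0 - q‖ + ‖q‖, fun k => calc
    ‖p k‖ ≤ ‖p k - q‖ + ‖q‖ := norm_le_norm_sub_add _ _
    _ ≤ ‖p 0 - q‖ + ‖q‖ := by gcongr; exact h (Nat.zero_le k)⟩

theorem separation_projection_bounded_general {H : Type*} [NormedAddCommGroup H]
    [InnerProductSpace ℝ H]
    (S : Set H) (hSne : S.Nonempty)
    (τmin τmax : ℝ) (hτ0 : 0 < τmin) (hτ2 : τmax < 2)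
    (p : ℕ → H) (g : ℕ → H) (c : ℕ → ℝ)
    (hsep : ∀ k, ∀ q ∈ S, ⟪g k, q⟫ + c k ≤ 0)
    (hstep : ∀ k,
      (0 < ⟪g k, p k⟫ + c k →
        ∃ τ ∈ Set.Icc τmin τmax,
          p (k + 1) = p k - ((τ * (⟪g k, p k⟫ + c k)) / ‖g k‖ ^ 2) • g k) ∧
      (⟪g k, p k⟫ + c k ≤ 0 → p (k + 1) = p k)) :
    ∃ M, ∀ k, ‖p k‖ ≤ M := by
  obtain ⟨q, hq⟩ := hSne
  refine exists_forall_norm_le_of_antitone_norm_sub (q := q) (antitone_nat_of_succ_le fun k => ?_)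
  rcases lt_or_ge 0 (⟪g k, p k⟫ + c k) with hviolated | hsatisfied
  · obtain ⟨τ, ⟨hτmin, hτmax⟩, hp⟩ := (hstep k).1 hviolated
    rw [hp]
    exact norm_sub_relaxed_halfspace_step_le (by linarith) (by linarith) hviolated.le (hsep k q hq)
  · rw [(hstep k).2 hsatisfied]

/-- The iterates of the generic linear separation–projection method for finding
a point in a nonempty closed convex set `S` form a bounded sequence. -/
theorem separation_projection_bounded {H : Type*} [NormedAddCommGroup H]
    [InnerProductSpace ℝ H] [CompleteSpace H]
    (S : Set H) (hSne : S.Nonempty) (hScl : IsClosed S) (hScv : Convex ℝ S)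
    (τmin τmax : ℝ) (hτ0 : 0 < τmin) (hτ1 : τmin < τmax) (hτ2 : τmax < 2)
    (p : ℕ → H) (g : ℕ → H) (c : ℕ → ℝ)
    (hsep : ∀ k, ∀ q ∈ S, ⟪g k, q⟫ + c k ≤ 0)
    (hstep : ∀ k,
      (0 < ⟪g k, p k⟫ + c k →
        ∃ τ ∈ Set.Icc τmin τmax,
          p (k + 1) = p k - ((τ * (⟪g k, p k⟫ + c k)) / ‖g k‖ ^ 2) • g k) ∧
      (⟪g k, p k⟫ + c k ≤ 0 → p (k + 1) = p k)) :
    ∃ M, ∀ k, ‖p k‖ ≤ M :=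
  separation_projection_bounded_general S hSne τmin τmax hτ0 hτ2 p g c hsep hstep
end

section
/- Let H be a real Hilbert space, S ⊂ H a nonempty closed convex set, and 0 < τ̲ < τ̄ < 2. Let (p^k) be a sequence in H and, for each k, let φ_k(p) = ⟪g_k, p⟫ + c_k be an affine functional such that φ_k(p) ≤ 0 for all p ∈ S, and suppose that for each k: if φ_k(p^k) > 0 then p^{k+1} = p^k − τ_k (φ_k(p^k)/‖g_k‖²) g_k for some τ_k ∈ [τ̲, τ̄], and otherwise p^{k+1} = p^k. If every weak cluster point of (p^k) belongs to S, then (p^k) converges weakly to some point of S. -/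
/-!
Each relaxed projection step moves the iterate no farther from any point of `S`, because the
half-space it projects onto contains `S` and `τ ≤ 2`. So the iterates are Fejér monotone with
respect to `S`: they are bounded and `‖p k - q‖` converges for every `q ∈ S`. By polarization,
`⟪q₁ - q₂, p k⟫` then converges for all `q₁ q₂ ∈ S`, which forces any two weak cluster points lying
in `S` to coincide (Opial's argument). Weak cluster points of a bounded sequence exist by the
sequential Banach–Alaoglu theorem on the separable closed span of its terms, and a bounded
sequence with a single weak cluster point converges weakly to it.
-/

open scoped RealInnerProductSpace
open Filter Topology

section Fejer

variable {E : Type*} [NormedAddCommGroup E]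

def IsFejerMonotone (u : ℕ → E) (S : Set E) : Prop :=
  ∀ q ∈ S, Antitone fun k => ‖u k - q‖

namespace IsFejerMonotone

variable {u : ℕ → E} {S : Set E}

theorem isBounded_range (hu : IsFejerMonotone u S) (hS : S.Nonempty) :
    Bornology.IsBounded (Set.range u) := by
  obtain ⟨q, hq⟩ := hS
  refine (Metric.isBounded_closedBall (x := q) (r := ‖u 0 - q‖)).subset ?_
  rintro _ ⟨k, rfl⟩
  exact mem_closedBall_iff_norm.2 (hu q hq (Nat.zero_le k))

theorem exists_tendsto_norm_sub (hu : IsFejerMonotone u S) {q : E} (hq : q ∈ S) :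
    ∃ d, Tendsto (fun k => ‖u k - q‖) atTop (𝓝 d) :=
  ⟨_, tendsto_atTop_ciInf (hu q hq) ⟨0, by rintro _ ⟨k, rfl⟩; exact norm_nonneg _⟩⟩

end IsFejerMonotone

end Fejer

section WeakConvergence

variable {H : Type*} [NormedAddCommGroup H] [InnerProductSpace ℝ H]

def WeakTendsto (u : ℕ → H) (q : H) : Prop :=
  ∀ y : H, Tendsto (fun k => ⟪y, u k⟫) atTop (𝓝 ⟪y, q⟫)

def IsWeakClusterPt (u : ℕ → H) (q : H) : Prop :=
  ∃ φ : ℕ → ℕ, StrictMono φ ∧ WeakTendsto (u ∘ φ) q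

theorem exists_isWeakClusterPt_of_isBounded [CompleteSpace H] {u : ℕ → H}
    (hu : Bornology.IsBounded (Set.range u)) : ∃ q, IsWeakClusterPt u q := by
  set K := (Submodule.span ℝ (Set.range u)).topologicalClosure
  have : TopologicalSpace.SeparableSpace K :=
    (Set.countable_range u).isSeparable.span.closure.separableSpace
  have huK (k : ℕ) : u k ∈ K :=
    Submodule.le_topologicalClosure _ (Submodule.subset_span ⟨k, rfl⟩)
  let v (k : ℕ) : WeakDual ℝ K :=
    StrongDual.toWeakDual (InnerProductSpace.toDual ℝ K ⟨u k, huK k⟩)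
  obtain ⟨M, hM⟩ := isBounded_iff_forall_norm_le.1 hu
  have hv (k : ℕ) : v k ∈ WeakDual.toStrongDual ⁻¹' Metric.closedBall 0 M := by
    rw [Set.mem_preimage, StrongDual.toStrongDual_toWeakDual, Metric.mem_closedBall]
    exact (dist_zero_right _).trans_le
      (((InnerProductSpace.toDual ℝ K).norm_map _).trans_le (hM _ ⟨k, rfl⟩))
  obtain ⟨f, -, φ, hφ, hf⟩ := WeakDual.isSeqCompact_closedBall ℝ K 0 M hv
  set q : K := (InnerProductSpace.toDual ℝ K).symm (WeakDual.toStrongDual f)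
  refine ⟨q, φ, hφ, fun y => ?_⟩
  -- Against vectors of `K`, `y` acts as its orthogonal projection onto `K`.
  have hproj (w : K) : ⟪y, w⟫ = ⟪w, K.orthogonalProjectionOnto y⟫ := by
    rw [real_inner_comm, ← K.inner_orthogonalProjectionOnto_eq_of_mem_left]
  have hvy (k : ℕ) : ⟪y, u k⟫ = v k (K.orthogonalProjectionOnto y) := hproj ⟨u k, huK k⟩
  have hfy : ⟪y, q⟫ = f (K.orthogonalProjectionOnto y) :=
    (hproj q).trans InnerProductSpace.toDual_symm_apply
  simp only [Function.comp_apply, hvy, hfy]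
  exact ((WeakDual.eval_continuous _).tendsto f).comp hf

theorem weakTendsto_of_isBounded_of_isWeakClusterPt_eq [CompleteSpace H] {u : ℕ → H} {q : H}
    (hu : Bornology.IsBounded (Set.range u)) (h : ∀ q', IsWeakClusterPt u q' → q' = q) :
    WeakTendsto u q := by
  intro y
  refine tendsto_of_subseq_tendsto fun ns hns => ?_
  obtain ⟨φ, -, hφ⟩ := strictMono_subseq_of_tendsto_atTop hns
  obtain ⟨q', ψ, hψ, hq'⟩ :=
    exists_isWeakClusterPt_of_isBounded (hu.subset (Set.range_comp_subset_range (ns ∘ φ) u))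
  obtain rfl : q' = q := h q' ⟨ns ∘ φ ∘ ψ, hφ.comp hψ, hq'⟩
  exact ⟨φ ∘ ψ, hq' y⟩

namespace IsFejerMonotone

variable {u : ℕ → H} {S : Set H}

theorem exists_tendsto_inner_sub (hu : IsFejerMonotone u S) {q₁ q₂ : H} (hq₁ : q₁ ∈ S)
    (hq₂ : q₂ ∈ S) : ∃ α, Tendsto (fun k => ⟪q₁ - q₂, u k⟫) atTop (𝓝 α) := by
  obtain ⟨d₁, hd₁⟩ := hu.exists_tendsto_norm_sub hq₁
  obtain ⟨d₂, hd₂⟩ := hu.exists_tendsto_norm_sub hq₂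
  have hpolar (x : H) :
      ⟪q₁ - q₂, x⟫ = (‖x - q₂‖ ^ 2 - ‖x - q₁‖ ^ 2 + ‖q₁‖ ^ 2 - ‖q₂‖ ^ 2) / 2 := by
    rw [norm_sub_sq_real, norm_sub_sq_real, inner_sub_left, real_inner_comm q₁,
      real_inner_comm q₂]
    ring
  simp only [hpolar]
  exact ⟨_, ((((hd₂.pow 2).sub (hd₁.pow 2)).add_const _).sub_const _).div_const 2⟩

theorem eq_of_isWeakClusterPt (hu : IsFejerMonotone u S) {q₁ q₂ : H} (hq₁ : q₁ ∈ S)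
    (hq₂ : q₂ ∈ S) (hc₁ : IsWeakClusterPt u q₁) (hc₂ : IsWeakClusterPt u q₂) : q₁ = q₂ := by
  obtain ⟨φ₁, hφ₁, hu₁⟩ := hc₁
  obtain ⟨φ₂, hφ₂, hu₂⟩ := hc₂
  obtain ⟨α, hα⟩ := hu.exists_tendsto_inner_sub hq₁ hq₂
  have h₁ : ⟪q₁ - q₂, q₁⟫ = α := tendsto_nhds_unique (hu₁ _) (hα.comp hφ₁.tendsto_atTop)
  have h₂ : ⟪q₁ - q₂, q₂⟫ = α := tendsto_nhds_unique (hu₂ _) (hα.comp hφ₂.tendsto_atTop)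
  have : ⟪q₁ - q₂, q₁ - q₂⟫ = 0 := by rw [inner_sub_right, h₁, h₂, sub_self]
  exact sub_eq_zero.1 (inner_self_eq_zero.1 this)

theorem exists_weakTendsto [CompleteSpace H] (hu : IsFejerMonotone u S) (hS : S.Nonempty)
    (hcluster : ∀ q, IsWeakClusterPt u q → q ∈ S) : ∃ q ∈ S, WeakTendsto u q := by
  have hbdd := hu.isBounded_range hS
  obtain ⟨q, hq⟩ := exists_isWeakClusterPt_of_isBounded hbdd
  exact ⟨q, hcluster q hq, weakTendsto_of_isBounded_of_isWeakClusterPt_eq hbdd fun q' hq' =>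
    hu.eq_of_isWeakClusterPt (hcluster q' hq') (hcluster q hq) hq' hq⟩

end IsFejerMonotone

noncomputable def relaxedProjection (g : H) (c τ : ℝ) (x : H) : H :=
  x - (τ * (⟪g, x⟫ + c) / ‖g‖ ^ 2) • g

theorem norm_relaxedProjection_sub_le {g x q : H} {c τ : ℝ} (hq : ⟪g, q⟫ + c ≤ 0)
    (hx : 0 ≤ ⟪g, x⟫ + c) (hτ : τ ∈ Set.Icc (0 : ℝ) 2) :
    ‖relaxedProjection g c τ x - q‖ ≤ ‖x - q‖ := by
  rcases eq_or_ne g 0 with rfl | hg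
  · simp [relaxedProjection]
  set r := ⟪g, x⟫ + c
  set t := τ * r / ‖g‖ ^ 2
  have hng : 0 < ‖g‖ ^ 2 := by positivity
  have ht : 0 ≤ t := div_nonneg (mul_nonneg hτ.1 hx) hng.le
  have hr : r ≤ ⟪x - q, g⟫ := by
    rw [real_inner_comm, inner_sub_right]
    linarith
  have hcross : (t * ‖g‖) ^ 2 ≤ 2 * (t * ⟪x - q, g⟫) :=
    calc (t * ‖g‖) ^ 2 = t * (τ * r) := by
          rw [mul_pow, sq t, mul_assoc, div_mul_cancel₀ _ hng.ne']
      _ ≤ t * (2 * r) := by gcongr; exact hτ.2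
      _ ≤ 2 * (t * ⟪x - q, g⟫) := by linarith [mul_le_mul_of_nonneg_left hr ht]
  have hsq : ‖(x - q) - t • g‖ ^ 2 ≤ ‖x - q‖ ^ 2 := by
    rw [norm_sub_sq_real, real_inner_smul_right, norm_smul, Real.norm_of_nonneg ht]
    linarith
  rw [relaxedProjection, sub_right_comm]
  exact (pow_le_pow_iff_left₀ (norm_nonneg _) (norm_nonneg _) two_ne_zero).1 hsq

end WeakConvergence

theorem separation_projection_weak_convergence_general {H : Type*} [NormedAddCommGroup H]
    [InnerProductSpace ℝ H] [CompleteSpace H]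
    (S : Set H) (hSne : S.Nonempty)
    (τmin τmax : ℝ) (hτ0 : 0 < τmin) (hτ2 : τmax < 2)
    (p : ℕ → H) (g : ℕ → H) (c : ℕ → ℝ)
    (hsep : ∀ k, ∀ q ∈ S, ⟪g k, q⟫ + c k ≤ 0)
    (hstep : ∀ k,
      (0 < ⟪g k, p k⟫ + c k →
        ∃ τ ∈ Set.Icc τmin τmax,
          p (k + 1) = p k - ((τ * (⟪g k, p k⟫ + c k)) / ‖g k‖ ^ 2) • g k) ∧
      (⟪g k, p k⟫ + c k ≤ 0 → p (k + 1) = p k))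
    (hcluster : ∀ q : H,
      (∃ φ : ℕ → ℕ, StrictMono φ ∧
        ∀ y : H, Filter.Tendsto (fun j => ⟪y, p (φ j)⟫) Filter.atTop (nhds ⟪y, q⟫)) →
      q ∈ S) :
    ∃ q ∈ S, ∀ y : H, Filter.Tendsto (fun k => ⟪y, p k⟫) Filter.atTop (nhds ⟪y, q⟫) := by
  have hfejer : IsFejerMonotone p S := fun q hq => antitone_nat_of_succ_le fun k => by
    rcases le_or_gt (⟪g k, p k⟫ + c k) 0 with hk | hk
    · rw [(hstep k).2 hk]
    · obtain ⟨τ, hτ, hp⟩ := (hstep k).1 hk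
      rw [hp]
      exact norm_relaxedProjection_sub_le (hsep k q hq) hk.le
        ⟨hτ0.le.trans hτ.1, hτ.2.trans hτ2.le⟩
  exact hfejer.exists_weakTendsto hSne hcluster

/-- If every weak cluster point of the iterates of the generic linear
separation–projection method belongs to the nonempty closed convex set `S`, then the iterates
converge weakly to a point of `S`. -/
theorem separation_projection_weak_convergence {H : Type*} [NormedAddCommGroup H]
    [InnerProductSpace ℝ H] [CompleteSpace H]
    (S : Set H) (hSne : S.Nonempty) (hScl : IsClosed S) (hScv : Convex ℝ S)
    (τmin τmax : ℝ) (hτ0 : 0 < τmin) (hτ1 : τmin < τmax) (hτ2 : τmax < 2)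
    (p : ℕ → H) (g : ℕ → H) (c : ℕ → ℝ)
    (hsep : ∀ k, ∀ q ∈ S, ⟪g k, q⟫ + c k ≤ 0)
    (hstep : ∀ k,
      (0 < ⟪g k, p k⟫ + c k →
        ∃ τ ∈ Set.Icc τmin τmax,
          p (k + 1) = p k - ((τ * (⟪g k, p k⟫ + c k)) / ‖g k‖ ^ 2) • g k) ∧
      (⟪g k, p k⟫ + c k ≤ 0 → p (k + 1) = p k))
    (hcluster : ∀ q : H,
      (∃ φ : ℕ → ℕ, StrictMono φ ∧
        ∀ y : H, Filter.Tendsto (fun j => ⟪y, p (φ j)⟫) Filter.atTop (nhds ⟪y, q⟫)) →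
      q ∈ S) :
    ∃ q ∈ S, ∀ y : H, Filter.Tendsto (fun k => ⟪y, p k⟫) Filter.atTop (nhds ⟪y, q⟫) :=
  separation_projection_weak_convergence_general S hSne τmin τmax hτ0 hτ2 p g c hsep hstep hcluster
end

section
/- Let H be a real Hilbert space, S ⊂ H a nonempty closed convex set, and 0 < τ̲ < τ̄ < 2. Let (p^k) be a sequence in H and, for each k, let φ_k(p) = ⟪g_k, p⟫ + c_k be an affine functional such that φ_k(p) ≤ 0 for all p ∈ S, and suppose that for each k: if φ_k(p^k) > 0 then p^{k+1} = p^k − τ_k (φ_k(p^k)/‖g_k‖²) g_k for some τ_k ∈ [τ̲, τ̄], and otherwise p^{k+1} = p^k. If there exists ξ > 0 with ‖g_k‖ ≤ ξ for all k ≥ 0, then limsup_{k→∞} φ_k(p^k) ≤ 0. -/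
/-!
Fix `q ∈ S`. Since `φ_k(q) ≤ 0`, a relaxed projection step with factor `τ` brings `pᵏ` closer
to `q`: `‖pᵏ⁺¹ - q‖² ≤ ‖pᵏ - q‖² - τ(2 - τ) φ_k(pᵏ)² / ‖g_k‖²`. With `τ ∈ [τ̲, τ̄]` and
`‖g_k‖ ≤ ξ`, `ξ²` times the decrease is at least `τ̲(2 - τ̄) (φ_k(pᵏ)⁺)²`, so these terms telescope
to a convergent series, `φ_k(pᵏ)⁺ → 0`, and hence `limsup φ_k(pᵏ) ≤ 0`.
-/

open scoped RealInnerProductSpace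
open Filter Topology

theorem summable_of_le_sub_succ {a u : ℕ → ℝ} (ha : ∀ k, 0 ≤ a k) (hu : ∀ k, 0 ≤ u k)
    (h : ∀ k, a k ≤ u k - u (k + 1)) : Summable a :=
  summable_of_sum_range_le ha fun n =>
    calc ∑ k ∈ Finset.range n, a k
        ≤ ∑ k ∈ Finset.range n, (u k - u (k + 1)) := Finset.sum_le_sum fun k _ => h k
      _ = u 0 - u n := Finset.sum_range_sub' u n
      _ ≤ u 0 := by linarith [hu n]

/-- Unlike `Filter.limsup_le_of_le`, no coboundedness is needed: if `u` is not bounded below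
along `f`, the limsup is the junk value `sInf ∅ = 0`. -/
theorem Real.limsup_nonpos_of_forall_pos_eventually_le {α : Type*} {f : Filter α} {u : α → ℝ}
    (h : ∀ ε > 0, ∀ᶠ x in f, u x ≤ ε) : limsup u f ≤ 0 := by
  rw [limsup_eq]
  by_cases hbdd : BddBelow {a | ∀ᶠ x in f, u x ≤ a}
  · exact le_of_forall_pos_le_add fun ε hε => by
      simpa using csInf_le hbdd (h ε hε)
  · rw [Real.sInf_of_not_bddBelow hbdd]

section RelaxedProjection

variable {H : Type*} [NormedAddCommGroup H] [InnerProductSpace ℝ H]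

/-- The relaxed projection onto the half-space `{⟪g, ·⟫ + c ≤ 0}` is Fejér with respect to it. -/
theorem norm_relaxedProjection_sub_sq_le {g p q : H} {c τ : ℝ} (hq : ⟪g, q⟫ + c ≤ 0)
    (hp : 0 ≤ ⟪g, p⟫ + c) (hτ : 0 ≤ τ) :
    ‖p - ((τ * (⟪g, p⟫ + c)) / ‖g‖ ^ 2) • g - q‖ ^ 2
      ≤ ‖p - q‖ ^ 2 - τ * (2 - τ) * (⟪g, p⟫ + c) ^ 2 / ‖g‖ ^ 2 := by
  set φ := ⟪g, p⟫ + c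
  set t := τ * φ / ‖g‖ ^ 2
  have ht : 0 ≤ t := by positivity
  have hφ_le : φ ≤ ⟪p - q, g⟫ := by
    rw [real_inner_comm, inner_sub_right]
    linarith
  have hexpand : ‖p - t • g - q‖ ^ 2 = ‖p - q‖ ^ 2 - 2 * t * ⟪p - q, g⟫ + t ^ 2 * ‖g‖ ^ 2 := by
    rw [sub_right_comm, norm_sub_sq_real, real_inner_smul_right, norm_smul, Real.norm_eq_abs,
      mul_pow, sq_abs]
    ring
  have hsq : t ^ 2 * ‖g‖ ^ 2 = τ ^ 2 * φ ^ 2 / ‖g‖ ^ 2 := by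
    rcases eq_or_ne ‖g‖ 0 with h0 | h0
    · simp [h0]
    · simp only [t]
      field_simp
  calc ‖p - t • g - q‖ ^ 2
      ≤ ‖p - q‖ ^ 2 - 2 * t * φ + t ^ 2 * ‖g‖ ^ 2 := by
        rw [hexpand]; nlinarith
    _ = ‖p - q‖ ^ 2 - τ * (2 - τ) * φ ^ 2 / ‖g‖ ^ 2 := by
        rw [hsq]; simp only [t]; ring

theorem mul_sq_max_le_norm_sub_sq_sub {g p p' q : H} {c τmin τmax ξ : ℝ}
    (hq : ⟪g, q⟫ + c ≤ 0) (hτmin : 0 ≤ τmin) (hτmax : τmax ≤ 2) (hg : ‖g‖ ≤ ξ)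
    (hstep : (0 < ⟪g, p⟫ + c →
        ∃ τ ∈ Set.Icc τmin τmax, p' = p - ((τ * (⟪g, p⟫ + c)) / ‖g‖ ^ 2) • g) ∧
      (⟪g, p⟫ + c ≤ 0 → p' = p)) :
    τmin * (2 - τmax) * max (⟪g, p⟫ + c) 0 ^ 2 ≤ ξ ^ 2 * (‖p - q‖ ^ 2 - ‖p' - q‖ ^ 2) := by
  rcases le_or_gt (⟪g, p⟫ + c) 0 with hφ | hφ
  · simp [max_eq_right hφ, hstep.2 hφ]
  obtain ⟨τ, ⟨hτmin_le, hτ_le⟩, rfl⟩ := hstep.1 hφ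
  rw [max_eq_left hφ.le]
  set φ := ⟪g, p⟫ + c
  set D := ‖p - q‖ ^ 2 - ‖p - (τ * φ / ‖g‖ ^ 2) • g - q‖ ^ 2
  have hg0 : 0 < ‖g‖ ^ 2 :=
    pow_pos (norm_pos_iff.2 fun h0 => by simp [φ, h0] at hφ hq; linarith) 2
  have hτ : τmin * (2 - τmax) ≤ τ * (2 - τ) := by nlinarith
  have hdecr : τ * (2 - τ) * φ ^ 2 ≤ ‖g‖ ^ 2 * D := by
    rw [← div_le_iff₀' hg0]
    linarith [norm_relaxedProjection_sub_sq_le hq hφ.le (hτmin.trans hτmin_le)]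
  have hD : 0 ≤ D := nonneg_of_mul_nonneg_right
    (hdecr.trans' (mul_nonneg (mul_nonneg (by linarith) (by linarith)) (sq_nonneg φ))) hg0
  calc τmin * (2 - τmax) * φ ^ 2 ≤ τ * (2 - τ) * φ ^ 2 := by gcongr
    _ ≤ ‖g‖ ^ 2 * D := hdecr
    _ ≤ ξ ^ 2 * D := by gcongr

end RelaxedProjection

theorem separation_projection_limsup_nonpos_general {H : Type*} [NormedAddCommGroup H]
    [InnerProductSpace ℝ H]
    (S : Set H) (hSne : S.Nonempty)
    (τmin τmax : ℝ) (hτ0 : 0 < τmin) (hτ2 : τmax < 2)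
    (p : ℕ → H) (g : ℕ → H) (c : ℕ → ℝ)
    (hsep : ∀ k, ∀ q ∈ S, ⟪g k, q⟫ + c k ≤ 0)
    (hstep : ∀ k,
      (0 < ⟪g k, p k⟫ + c k →
        ∃ τ ∈ Set.Icc τmin τmax,
          p (k + 1) = p k - ((τ * (⟪g k, p k⟫ + c k)) / ‖g k‖ ^ 2) • g k) ∧
      (⟪g k, p k⟫ + c k ≤ 0 → p (k + 1) = p k))
    (ξ : ℝ) (hg : ∀ k, ‖g k‖ ≤ ξ) :
    Filter.limsup (fun k => ⟪g k, p k⟫ + c k) Filter.atTop ≤ 0 := by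
  obtain ⟨q, hq⟩ := hSne
  set α := τmin * (2 - τmax)
  have hα : 0 < α := mul_pos hτ0 (by linarith)
  have hsummable : Summable fun k => α * max (⟪g k, p k⟫ + c k) 0 ^ 2 :=
    summable_of_le_sub_succ (fun k => by positivity) (fun k => by positivity) fun k =>
      (mul_sq_max_le_norm_sub_sq_sub (hsep k q hq) hτ0.le hτ2.le (hg k) (hstep k)).trans_eq
        (mul_sub _ _ _)
  refine Real.limsup_nonpos_of_forall_pos_eventually_le fun ε hε => ?_
  have hsmall :=
    hsummable.tendsto_atTop_zero.eventually (gt_mem_nhds (by positivity : 0 < α * ε ^ 2))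
  filter_upwards [hsmall] with k hk
  by_contra! hlt
  rw [max_eq_left (hε.trans hlt).le] at hk
  exact hk.not_ge (by gcongr)

/-- If the gradients of the separators in the generic linear
separation–projection method are uniformly bounded by some `ξ > 0`, then
`limsup φ_k(pᵏ) ≤ 0`. -/
theorem separation_projection_limsup_nonpos {H : Type*} [NormedAddCommGroup H]
    [InnerProductSpace ℝ H] [CompleteSpace H]
    (S : Set H) (hSne : S.Nonempty) (hScl : IsClosed S) (hScv : Convex ℝ S)
    (τmin τmax : ℝ) (hτ0 : 0 < τmin) (hτ1 : τmin < τmax) (hτ2 : τmax < 2)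
    (p : ℕ → H) (g : ℕ → H) (c : ℕ → ℝ)
    (hsep : ∀ k, ∀ q ∈ S, ⟪g k, q⟫ + c k ≤ 0)
    (hstep : ∀ k,
      (0 < ⟪g k, p k⟫ + c k →
        ∃ τ ∈ Set.Icc τmin τmax,
          p (k + 1) = p k - ((τ * (⟪g k, p k⟫ + c k)) / ‖g k‖ ^ 2) • g k) ∧
      (⟪g k, p k⟫ + c k ≤ 0 → p (k + 1) = p k))
    (ξ : ℝ) (hξ : 0 < ξ) (hg : ∀ k, ‖g k‖ ≤ ξ) :
    Filter.limsup (fun k => ⟪g k, p k⟫ + c k) Filter.atTop ≤ 0 :=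
  separation_projection_limsup_nonpos_general S hSne τmin τmax hτ0 hτ2 p g c hsep hstep ξ hg
end

section
/- Let H be a real Hilbert space, A : H → Set H a monotone set-valued operator, B : H → H monotone, C : H → H β-cocoercive with β > 0, and D : H → H monotone and Fréchet differentiable with derivative D'. Let g, w ∈ H, ρ > 0, and suppose x, y ∈ H satisfy the proximal-Newton step: g + ρ w − ρ(B(g) + C(g)) − x ∈ ρ(A(x) + D_{(g)}(x)) and y = (g − x)/ρ + w + [B(x) − B(g)] + [D(x) − D_{(g)}(x)]. Then for every pair (r, a) with a ∈ A(r), ⟪r − x, y − B(r) − C(r) − D(r) − a⟫ ≤ (1/(4β))‖x − g‖². -/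
open scoped RealInnerProductSpace

/-- A backward/half-forward/proximal-Newton step `(x, y)` taken at the point
`(g, w)` satisfies, for every `(r, a)` in the graph of `A`,
`⟪r − x, y − B r − C r − D r − a⟫ ≤ (1/(4β))‖x − g‖²`. -/
theorem proximal_newton_step_separation {H : Type*} [NormedAddCommGroup H]
    [InnerProductSpace ℝ H]
    (A : H → Set H) (hA : ∀ x y u v, u ∈ A x → v ∈ A y → 0 ≤ ⟪x - y, u - v⟫)
    (B : H → H) (hB : ∀ x y, 0 ≤ ⟪x - y, B x - B y⟫)
    (C : H → H) (β : ℝ) (hβ : 0 < β)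
    (hC : ∀ x y, β * ‖C x - C y‖ ^ 2 ≤ ⟪x - y, C x - C y⟫)
    (D : H → H) (D' : H → H →L[ℝ] H) (hD : ∀ x, HasFDerivAt D (D' x) x)
    (hDmono : ∀ x y, 0 ≤ ⟪x - y, D x - D y⟫)
    (g w : H) (ρ : ℝ) (hρ : 0 < ρ) (x y : H)
    (hx : ∃ a ∈ A x, g + ρ • w - ρ • (B g + C g) - x = ρ • (a + (D g + D' g (x - g))))
    (hy : y = ρ⁻¹ • (g - x) + w + (B x - B g) + (D x - (D g + D' g (x - g))))
    (r a : H) (ha : a ∈ A r) :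
    ⟪r - x, y - B r - C r - D r - a⟫ ≤ 1 / (4 * β) * ‖x - g‖ ^ 2 := by

  obtain ⟨a', ha', heq⟩ := hx
  have hρ' : ρ ≠ 0 := hρ.ne'
  have ha'eq : a' = ρ⁻¹ • (g - x) + w - B g - C g - (D g + D' g (x - g)) := by
    have h2 := congrArg (fun z => ρ⁻¹ • z) heq
    simp only [smul_smul, inv_mul_cancel₀ hρ', one_smul, smul_sub, smul_add] at h2
    have h3 := eq_sub_of_add_eq h2.symm
    rw [h3]; module
  have key : y - B r - C r - D r - a =
      (a' - a) - (B r - B x) - (C r - C g) - (D r - D x) := by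
    rw [hy, ha'eq]; module
  have e1 : (0:ℝ) ≤ ⟪r - x, a - a'⟫ := hA r x a a' ha ha'
  have e2 : (0:ℝ) ≤ ⟪r - x, B r - B x⟫ := hB r x
  have e3 : (0:ℝ) ≤ ⟪r - x, D r - D x⟫ := hDmono r x
  have e4 : -⟪r - x, C r - C g⟫ ≤ 1 / (4 * β) * ‖x - g‖ ^ 2 := by
    have h5 : ⟪r - x, C r - C g⟫ = ⟪r - g, C r - C g⟫ + ⟪g - x, C r - C g⟫ := by
      rw [← inner_add_left]; congr 1; abel
    have h6 : β * ‖C r - C g‖ ^ 2 ≤ ⟪r - g, C r - C g⟫ := hC r g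
    have h7 : -(‖g - x‖ * ‖C r - C g‖) ≤ ⟪g - x, C r - C g⟫ :=
      neg_le_of_abs_le (abs_real_inner_le_norm _ _)
    have h8 : ‖g - x‖ = ‖x - g‖ := norm_sub_rev _ _
    rw [h8] at h7
    rw [h5]
    rw [div_mul_eq_mul_div, le_div_iff₀ (by positivity)]
    nlinarith [sq_nonneg (2 * β * ‖C r - C g‖ - ‖x - g‖), norm_nonneg (C r - C g),
      norm_nonneg (x - g)]
  have expand : ⟪r - x, y - B r - C r - D r - a⟫ =
      -⟪r - x, a - a'⟫ - ⟪r - x, B r - B x⟫ - ⟪r - x, C r - C g⟫ - ⟪r - x, D r - D x⟫ := by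
    rw [key]
    simp only [inner_sub_right, inner_neg_right]
    ring
  rw [expand]
  linarith
end

section
/- Let H₀, H₁, …, H_{n−1} be real Hilbert spaces and set H_n := H₀. For i = 1, …, n let G_i : H₀ → H_i be a bounded linear operator with G_n the identity; let A_i : H_i → Set H_i be monotone, B_i : H_i → H_i monotone, C_i : H_i → H_i β_i-cocoercive with β_i > 0, D_i : H_i → H_i monotone and Fréchet differentiable; and set T_i := A_i + B_i + C_i + D_i. Let S := {(z, w₁, …, w_{n−1}) : w_i ∈ T_i(G_i z) for i = 1, …, n, where w_n := −Σ_{i=1}^{n−1} G_i* w_i}. Fix z^k ∈ H₀ and, for each i = 1, …, n, points x_i, y_i ∈ H_i satisfying y_i − B_i(x_i) − D_i(x_i) − C_i(G_i z^k) ∈ A_i(x_i). Then for every p = (z, w₁, …, w_{n−1}) ∈ S, with w_n := −Σ_{i=1}^{n−1} G_i* w_i, Σ_{i=1}^{n} [⟪G_i z − x_i, y_i − w_i⟫ − (1/(4β_i))‖x_i − G_i z^k‖²] ≤ 0. -/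
open scoped RealInnerProductSpace


private lemma key_separator {F : Type*} [NormedAddCommGroup F] [InnerProductSpace ℝ F]
    (A : F → Set F) (hA : ∀ x y u v, u ∈ A x → v ∈ A y → 0 ≤ ⟪x - y, u - v⟫)
    (B : F → F) (hB : ∀ x y, 0 ≤ ⟪x - y, B x - B y⟫)
    (C : F → F) (β : ℝ) (hβ : 0 < β)
    (hC : ∀ x y, β * ‖C x - C y‖ ^ 2 ≤ ⟪x - y, C x - C y⟫)
    (D : F → F) (hD : ∀ x y, 0 ≤ ⟪x - y, D x - D y⟫)
    (zk x y gz w : F)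
    (hu : y - B x - D x - C zk ∈ A x)
    (hv : w - B gz - C gz - D gz ∈ A gz) :
    ⟪gz - x, y - w⟫ - 1 / (4 * β) * ‖x - zk‖ ^ 2 ≤ 0 := by
  have h1 := hA x gz _ _ hu hv
  have h2 := hB x gz
  have h3 := hD x gz
  have hc := hC zk gz
  have hcs : ⟪zk - x, C zk - C gz⟫ ≤ ‖x - zk‖ * ‖C zk - C gz‖ := by
    calc ⟪zk - x, C zk - C gz⟫ ≤ ‖zk - x‖ * ‖C zk - C gz‖ := real_inner_le_norm _ _
    _ = ‖x - zk‖ * ‖C zk - C gz‖ := by rw [norm_sub_rev]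
  have e1 : ⟪gz - x, y - w⟫ =
      ⟪gz - x, (y - B x - D x - C zk) - (w - B gz - C gz - D gz)⟫ +
      ⟪gz - x, B x - B gz⟫ + ⟪gz - x, D x - D gz⟫ + ⟪gz - x, C zk - C gz⟫ := by
    rw [← inner_add_right, ← inner_add_right, ← inner_add_right]
    congr 1
    abel
  have e2 : ∀ t : F, ⟪gz - x, t⟫ = -⟪x - gz, t⟫ := fun t => by
    rw [← inner_neg_left]; congr 1; abel
  have e3 : ⟪gz - x, C zk - C gz⟫ = -⟪zk - gz, C zk - C gz⟫ + ⟪zk - x, C zk - C gz⟫ := by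
    rw [← inner_neg_left, ← inner_add_left]; congr 1; abel
  rw [e1, e2 ((y - B x - D x - C zk) - (w - B gz - C gz - D gz)), e2 (B x - B gz),
    e2 (D x - D gz), e3]
  have hbound : ‖x - zk‖ * ‖C zk - C gz‖ - β * ‖C zk - C gz‖ ^ 2 ≤
      1 / (4 * β) * ‖x - zk‖ ^ 2 := by
    rw [div_mul_eq_mul_div, one_mul, le_div_iff₀ (by positivity)]
    nlinarith [sq_nonneg (2 * β * ‖C zk - C gz‖ - ‖x - zk‖)]
  linarith

/-- The affine separator built from pairs `(x_i, y_i)` satisfying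
`y_i − B_i(x_i) − D_i(x_i) − C_i(G_i zᵏ) ∈ A_i(x_i)` is nonpositive on the extended-solution
set `S`.  Indices `i = 1, …, n−1` are modeled by `i : Fin m` (with spaces `E i`), and index `n`
(for which `G_n = id` and the space is `H₀`) is treated separately via the operators
`An, Bn, Cn, Dn` and the points `xn, yn`. -/
theorem separator_nonpos_on_extended_solution_set
    {H0 : Type*} [NormedAddCommGroup H0] [InnerProductSpace ℝ H0] [CompleteSpace H0]
    {m : ℕ} {E : Fin m → Type*} [∀ i, NormedAddCommGroup (E i)]
    [∀ i, InnerProductSpace ℝ (E i)] [∀ i, CompleteSpace (E i)]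
    (G : ∀ i, H0 →L[ℝ] E i)
    (A : ∀ i, E i → Set (E i))
    (hA : ∀ i, ∀ x y u v, u ∈ A i x → v ∈ A i y → 0 ≤ ⟪x - y, u - v⟫)
    (B : ∀ i, E i → E i) (hB : ∀ i, ∀ x y, 0 ≤ ⟪x - y, B i x - B i y⟫)
    (C : ∀ i, E i → E i) (β : Fin m → ℝ) (hβ : ∀ i, 0 < β i)
    (hC : ∀ i, ∀ x y, β i * ‖C i x - C i y‖ ^ 2 ≤ ⟪x - y, C i x - C i y⟫)
    (D : ∀ i, E i → E i) (D' : ∀ i, E i → E i →L[ℝ] E i)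
    (hD : ∀ i, ∀ x, HasFDerivAt (D i) (D' i x) x)
    (hDmono : ∀ i, ∀ x y, 0 ≤ ⟪x - y, D i x - D i y⟫)
    (An : H0 → Set H0)
    (hAn : ∀ x y u v, u ∈ An x → v ∈ An y → 0 ≤ ⟪x - y, u - v⟫)
    (Bn : H0 → H0) (hBn : ∀ x y, 0 ≤ ⟪x - y, Bn x - Bn y⟫)
    (Cn : H0 → H0) (βn : ℝ) (hβn : 0 < βn)
    (hCn : ∀ x y, βn * ‖Cn x - Cn y‖ ^ 2 ≤ ⟪x - y, Cn x - Cn y⟫)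
    (Dn : H0 → H0) (Dn' : H0 → H0 →L[ℝ] H0) (hDn : ∀ x, HasFDerivAt Dn (Dn' x) x)
    (hDnmono : ∀ x y, 0 ≤ ⟪x - y, Dn x - Dn y⟫)
    (zk : H0) (x : ∀ i, E i) (y : ∀ i, E i) (xn yn : H0)
    (hxy : ∀ i, y i - B i (x i) - D i (x i) - C i (G i zk) ∈ A i (x i))
    (hxyn : yn - Bn xn - Dn xn - Cn zk ∈ An xn)
    (z : H0) (w : ∀ i, E i)
    (hw : ∀ i, w i - B i (G i z) - C i (G i z) - D i (G i z) ∈ A i (G i z))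
    (hwn : (-(∑ i, ContinuousLinearMap.adjoint (G i) (w i))) - Bn z - Cn z - Dn z ∈ An z) :
    (∑ i, (⟪G i z - x i, y i - w i⟫ - 1 / (4 * β i) * ‖x i - G i zk‖ ^ 2)) +
      (⟪z - xn, yn - (-(∑ i, ContinuousLinearMap.adjoint (G i) (w i)))⟫ -
        1 / (4 * βn) * ‖xn - zk‖ ^ 2) ≤ 0 := by
  have hsum : ∀ i, ⟪G i z - x i, y i - w i⟫ - 1 / (4 * β i) * ‖x i - G i zk‖ ^ 2 ≤ 0 :=
    fun i => key_separator (A i) (hA i) (B i) (hB i) (C i) (β i) (hβ i) (hC i) (D i)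
      (hDmono i) (G i zk) (x i) (y i) (G i z) (w i) (hxy i) (hw i)
  have hn := key_separator An hAn Bn hBn Cn βn hβn hCn Dn hDnmono zk xn yn z
    (-(∑ i, ContinuousLinearMap.adjoint (G i) (w i))) hxyn hwn
  have hs : (∑ i, (⟪G i z - x i, y i - w i⟫ - 1 / (4 * β i) * ‖x i - G i zk‖ ^ 2)) ≤ 0 :=
    Finset.sum_nonpos fun i _ => hsum i
  linarith
end

section
/- Let H be a real Hilbert space, B : H → H an ℓ-Lipschitz continuous map (ℓ ≥ 0), and β > 0. Let 0 < ρ̲ ≤ ρ ≤ ρ̄ < 1/(1/(4β) + ℓ). Let g, w ∈ H, x ∈ H, and y := (g − x)/ρ + w + [B(x) − B(g)]. Define Δ := ⟪g − x, y − w⟫ − (1/(4β))‖x − g‖². Then Δ ≥ (1/2)[1/ρ̄ − (1/(4β) + ℓ)] (‖x − g‖² + (ρ̲/(1 + ρ̄ℓ))² ‖y − w‖²). -/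
open scoped RealInnerProductSpace

/-- Lower bound on the per-operator contribution
`Δ = ⟪g − x, y − w⟫ − (1/(4β))‖x − g‖²` for a backward step with Tseng forward correction,
when the stepsize satisfies `0 < ρ̲ ≤ ρ ≤ ρ̄ < 1/(1/(4β) + ℓ)`. -/
theorem delta_lower_bound_tseng {H : Type*} [NormedAddCommGroup H] [InnerProductSpace ℝ H]
    (B : H → H) (ℓ : ℝ) (hℓ : 0 ≤ ℓ) (hB : ∀ x y, ‖B x - B y‖ ≤ ℓ * ‖x - y‖)
    (β : ℝ) (hβ : 0 < β)
    (ρlo ρhi ρ : ℝ) (h1 : 0 < ρlo) (h2 : ρlo ≤ ρ) (h3 : ρ ≤ ρhi)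
    (h4 : ρhi < 1 / (1 / (4 * β) + ℓ))
    (g w x : H) (y : H)
    (hy : y = ρ⁻¹ • (g - x) + w + (B x - B g)) :
    1 / 2 * (1 / ρhi - (1 / (4 * β) + ℓ)) *
        (‖x - g‖ ^ 2 + (ρlo / (1 + ρhi * ℓ)) ^ 2 * ‖y - w‖ ^ 2) ≤
      ⟪g - x, y - w⟫ - 1 / (4 * β) * ‖x - g‖ ^ 2 := by
  have hρ : 0 < ρ := lt_of_lt_of_le h1 h2
  have hρhi : 0 < ρhi := lt_of_lt_of_le hρ h3
  have hβ4 : (0:ℝ) < 4 * β := by linarith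
  have hc : (0:ℝ) < 1 / (4 * β) + ℓ := by positivity
  have hden : (0:ℝ) < 1 + ρhi * ℓ := by positivity
  set a : ℝ := ‖x - g‖ with ha_def
  set b : ℝ := ‖y - w‖ with hb_def
  have ha : 0 ≤ a := norm_nonneg _
  have hb0 : 0 ≤ b := norm_nonneg _
  have hyw' : y - w = ρ⁻¹ • (g - x) + (B x - B g) := by
    rw [hy]; abel
  -- inner product identity
  have hgx : ‖g - x‖ = a := by rw [ha_def, norm_sub_rev]
  have hinner : ⟪g - x, y - w⟫ = ρ⁻¹ * a ^ 2 + ⟪g - x, B x - B g⟫ := by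
    rw [hyw', inner_add_right, real_inner_smul_right, real_inner_self_eq_norm_sq, hgx]
  have hCS : -(ℓ * a ^ 2) ≤ ⟪g - x, B x - B g⟫ := by
    have h := abs_real_inner_le_norm (g - x) (B x - B g)
    have h2' : ‖B x - B g‖ ≤ ℓ * a := hB x g
    have : |⟪g - x, B x - B g⟫| ≤ a * (ℓ * a) := by
      calc |⟪g - x, B x - B g⟫| ≤ ‖g - x‖ * ‖B x - B g‖ := h
        _ ≤ a * (ℓ * a) := by
            rw [hgx]
            exact mul_le_mul_of_nonneg_left h2' ha
    have := neg_abs_le ⟪g - x, B x - B g⟫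
    nlinarith [abs_nonneg ⟪g - x, B x - B g⟫]
  have hIlow : ρ⁻¹ * a ^ 2 - ℓ * a ^ 2 ≤ ⟪g - x, y - w⟫ := by
    rw [hinner]; linarith
  -- bound on b
  have hbb : b ≤ ρ⁻¹ * a + ℓ * a := by
    calc b = ‖ρ⁻¹ • (g - x) + (B x - B g)‖ := by rw [hb_def, hyw']
      _ ≤ ‖ρ⁻¹ • (g - x)‖ + ‖B x - B g‖ := norm_add_le _ _
      _ ≤ ρ⁻¹ * a + ℓ * a := by
          have : ‖ρ⁻¹ • (g - x)‖ = ρ⁻¹ * a := by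
            rw [norm_smul, Real.norm_eq_abs, abs_of_pos (by positivity : (0:ℝ) < ρ⁻¹), hgx]
          rw [this]
          exact add_le_add le_rfl (hB x g)
  -- k * (1/ρ + ℓ) ≤ 1
  set k : ℝ := ρlo / (1 + ρhi * ℓ) with hk_def
  have hk0 : 0 ≤ k := by positivity
  have hk1 : k * (ρ⁻¹ + ℓ) ≤ 1 := by
    rw [hk_def, div_mul_eq_mul_div, div_le_one hden]
    have h1' : ρlo * ρ⁻¹ ≤ 1 := by
      rw [mul_inv_le_iff₀ hρ, one_mul]; exact h2
    have h2' : ρlo * ℓ ≤ ρhi * ℓ :=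
      mul_le_mul_of_nonneg_right (le_trans h2 h3) hℓ
    calc ρlo * (ρ⁻¹ + ℓ) = ρlo * ρ⁻¹ + ρlo * ℓ := by ring
      _ ≤ 1 + ρhi * ℓ := add_le_add h1' h2'
  have hkb : k * b ≤ a := by
    calc k * b ≤ k * ((ρ⁻¹ + ℓ) * a) := by
          apply mul_le_mul_of_nonneg_left _ hk0
          calc b ≤ ρ⁻¹ * a + ℓ * a := hbb
            _ = (ρ⁻¹ + ℓ) * a := by ring
      _ = (k * (ρ⁻¹ + ℓ)) * a := by ring
      _ ≤ 1 * a := mul_le_mul_of_nonneg_right hk1 ha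
      _ = a := one_mul a
  have hk2b2 : k ^ 2 * b ^ 2 ≤ a ^ 2 := by nlinarith [mul_nonneg hk0 hb0]
  -- coefficient positivity
  have hcoef : 0 ≤ 1 / ρhi - (1 / (4 * β) + ℓ) := by
    have : ρhi * (1 / (4 * β) + ℓ) < 1 := by
      rw [← lt_div_iff₀ hc]; exact h4
    have h5 : 1 / (4 * β) + ℓ < 1 / ρhi := by
      rw [lt_div_iff₀ hρhi]; nlinarith
    linarith
  have hρρhi : 1 / ρhi ≤ ρ⁻¹ := by
    rw [one_div]
    exact inv_anti₀ hρ h3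
  have ha2 : (0:ℝ) ≤ a ^ 2 := sq_nonneg a
  calc 1 / 2 * (1 / ρhi - (1 / (4 * β) + ℓ)) * (a ^ 2 + k ^ 2 * b ^ 2)
      ≤ 1 / 2 * (1 / ρhi - (1 / (4 * β) + ℓ)) * (2 * a ^ 2) := by
        apply mul_le_mul_of_nonneg_left _ (by positivity)
        linarith
    _ = (1 / ρhi - (1 / (4 * β) + ℓ)) * a ^ 2 := by ring
    _ ≤ (ρ⁻¹ - (1 / (4 * β) + ℓ)) * a ^ 2 := by
        apply mul_le_mul_of_nonneg_right _ ha2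
        linarith
    _ = (ρ⁻¹ * a ^ 2 - ℓ * a ^ 2) - 1 / (4 * β) * a ^ 2 := by ring
    _ ≤ ⟪g - x, y - w⟫ - 1 / (4 * β) * a ^ 2 := by linarith
end

section
/- Let H be a real Hilbert space, B : H → H an ℓ-Lipschitz continuous map (ℓ ≥ 0), D : H → H a Fréchet differentiable map whose derivative D' is m-Lipschitz in operator norm (m ≥ 0), and let β > 0, δ̂ > 0, 0 < θ̄ < 2, and 0 < ρ_min ≤ ρ ≤ ρ_max. Let g, w, x ∈ H and y := (g − x)/ρ + w + [B(x) − B(g)] + [D(x) − D_{(g)}(x)]. Assume 4ℓ²ρ² + (β^{-1} + δ̂)ρ + (mρ‖x − g‖)² ≤ θ̄. Define Δ := ⟪g − x, y − w⟫ − (1/(4β))‖x − g‖². Then Δ ≥ ((2 − θ̄)/(4ρ_max))‖x − g‖² + (ρ_min/2)‖y − w‖². -/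
/-!
Write `y - w = (g - x) / ρ + e`, where `e` collects the Lipschitz residual of `B` and the Taylor
remainder of `D`, so that `‖e‖ ≤ ℓ‖x - g‖ + (m/2)‖x - g‖²`. Polarization gives
`⟪g - x, y - w⟫ = ‖x - g‖²/(2ρ) + (ρ/2)‖y - w‖² - (ρ/2)‖e‖²`, and by `(a + b)² ≤ 2a² + 2b²` the
line-search condition is exactly what absorbs `(ρ/2)‖e‖²` and `‖x - g‖²/(4β)` into `‖x - g‖²/(2ρ)`.
-/

open scoped RealInnerProductSpace
open Set

section Taylor

variable {E F : Type*} [NormedAddCommGroup E] [NormedSpace ℝ E]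
  [NormedAddCommGroup F] [NormedSpace ℝ F]

/-- Comparison with `B t = C t² / 2`, whose derivative `C t` dominates `‖f'‖`. -/
theorem norm_image_one_le_of_norm_deriv_le_mul {f f' : ℝ → F} {C : ℝ} (h0 : f 0 = 0)
    (hf : ∀ t ∈ Icc (0 : ℝ) 1, HasDerivAt f (f' t) t)
    (bound : ∀ t ∈ Ico (0 : ℝ) 1, ‖f' t‖ ≤ C * t) : ‖f 1‖ ≤ C / 2 := by
  have hB : ∀ t : ℝ, HasDerivAt (fun t => C / 2 * t ^ 2) (C * t) t := fun t =>
    ((hasDerivAt_pow 2 t).const_mul (C / 2)).congr_deriv (by ring)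
  have := image_norm_le_of_norm_deriv_right_le_deriv_boundary
    (fun t ht => (hf t ht).continuousAt.continuousWithinAt)
    (fun t ht => (hf t (Ico_subset_Icc_self ht)).hasDerivWithinAt)
    (by simp [h0]) hB bound (right_mem_Icc.2 zero_le_one)
  simpa using this

theorem norm_sub_linearization_le {D : E → F} {D' : E → E →L[ℝ] F}
    (hD : ∀ x, HasFDerivAt D (D' x) x) {m : ℝ} (hDlip : ∀ x y, ‖D' x - D' y‖ ≤ m * ‖x - y‖)
    (g x : E) : ‖D x - (D g + D' g (x - g))‖ ≤ m / 2 * ‖x - g‖ ^ 2 := by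
  set v := x - g
  have hderiv : ∀ t : ℝ, HasDerivAt (fun t : ℝ => D (g + t • v) - D g - t • D' g v)
      (D' (g + t • v) v - D' g v) t := fun t => by
    have hline : HasDerivAt (fun t : ℝ => g + t • v) v t := by
      simpa using ((hasDerivAt_id t).smul_const v).const_add g
    exact (((hD _).comp_hasDerivAt t hline).sub_const (D g)).sub
      (by simpa using (hasDerivAt_id t).smul_const (D' g v))
  have bound : ∀ t ∈ Ico (0 : ℝ) 1, ‖D' (g + t • v) v - D' g v‖ ≤ m * ‖v‖ ^ 2 * t := by
    intro t ht
    calc ‖D' (g + t • v) v - D' g v‖ = ‖(D' (g + t • v) - D' g) v‖ := rfl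
      _ ≤ ‖D' (g + t • v) - D' g‖ * ‖v‖ := ContinuousLinearMap.le_opNorm _ _
      _ ≤ m * ‖(g + t • v) - g‖ * ‖v‖ := by gcongr; exact hDlip _ _
      _ = m * ‖v‖ ^ 2 * t := by
        rw [add_sub_cancel_left, norm_smul, Real.norm_of_nonneg ht.1]; ring
  have := norm_image_one_le_of_norm_deriv_le_mul (by simp) (fun t _ => hderiv t) bound
  rw [one_smul, one_smul, add_sub_cancel g x] at this
  calc ‖D x - (D g + D' g v)‖ = ‖D x - D g - D' g v‖ := by rw [sub_sub]
    _ ≤ m * ‖v‖ ^ 2 / 2 := this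
    _ = m / 2 * ‖v‖ ^ 2 := by ring

end Taylor

theorem le_inner_of_norm_smul_sub_le {H : Type*} [NormedAddCommGroup H] [InnerProductSpace ℝ H]
    {u v : H} {ρ c : ℝ} (hρ : 0 < ρ) (h : ‖ρ • v - u‖ ≤ ρ * c) :
    ‖u‖ ^ 2 / (2 * ρ) + ρ / 2 * ‖v‖ ^ 2 - ρ / 2 * c ^ 2 ≤ ⟪u, v⟫ := by
  have hpolar := norm_sub_sq_real (ρ • v) u
  rw [norm_smul, Real.norm_of_nonneg hρ.le, real_inner_smul_left] at hpolar
  have hsq : ‖ρ • v - u‖ ^ 2 ≤ (ρ * c) ^ 2 := pow_le_pow_left₀ (norm_nonneg _) h 2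
  suffices 2 * ρ * (‖u‖ ^ 2 / (2 * ρ) + ρ / 2 * ‖v‖ ^ 2 - ρ / 2 * c ^ 2) ≤ 2 * ρ * ⟪u, v⟫ from
    le_of_mul_le_mul_left this (by positivity)
  have hexpand : 2 * ρ * (‖u‖ ^ 2 / (2 * ρ) + ρ / 2 * ‖v‖ ^ 2 - ρ / 2 * c ^ 2) =
      ‖u‖ ^ 2 + (ρ * ‖v‖) ^ 2 - (ρ * c) ^ 2 := by
    field_simp
  rw [hexpand, real_inner_comm]
  linarith

theorem line_search_bound_le {ℓ m β δ θ ρ n : ℝ} (hρ : 0 < ρ) (hδ : 0 ≤ δ)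
    (hstep : 4 * ℓ ^ 2 * ρ ^ 2 + (β⁻¹ + δ) * ρ + (m * ρ * n) ^ 2 ≤ θ) :
    (2 - θ) / (4 * ρ) * n ^ 2 + β⁻¹ / 4 * n ^ 2 ≤
      n ^ 2 / (2 * ρ) - ρ / 2 * (ℓ * n + m / 2 * n ^ 2) ^ 2 := by
  have hsq := add_sq_le (a := ℓ * n) (b := m / 2 * n ^ 2)
  have hexpand : n ^ 2 / (2 * ρ) - ρ / 2 * (ℓ * n + m / 2 * n ^ 2) ^ 2
      - ((2 - θ) / (4 * ρ) * n ^ 2 + β⁻¹ / 4 * n ^ 2)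
      = ((θ - β⁻¹ * ρ) * n ^ 2 - 2 * ρ ^ 2 * (ℓ * n + m / 2 * n ^ 2) ^ 2) / (4 * ρ) := by
    field_simp; ring
  rw [← sub_nonneg, hexpand]
  have : 0 ≤ δ * ρ * n ^ 2 := by positivity
  apply div_nonneg _ (by positivity)
  nlinarith

theorem delta_lower_bound_proximal_newton_general {H : Type*} [NormedAddCommGroup H]
    [InnerProductSpace ℝ H]
    (B : H → H) (ℓ : ℝ) (hB : ∀ x y, ‖B x - B y‖ ≤ ℓ * ‖x - y‖)
    (D : H → H) (D' : H → H →L[ℝ] H) (hD : ∀ x, HasFDerivAt D (D' x) x)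
    (mD : ℝ) (hDlip : ∀ x y, ‖D' x - D' y‖ ≤ mD * ‖x - y‖)
    (β δhat θbar : ℝ) (hδ : 0 < δhat) (hθ2 : θbar < 2)
    (ρmin ρmax ρ : ℝ) (h1 : 0 < ρmin) (h2 : ρmin ≤ ρ) (h3 : ρ ≤ ρmax)
    (g w x : H) (y : H)
    (hy : y = ρ⁻¹ • (g - x) + w + (B x - B g) + (D x - (D g + D' g (x - g))))
    (hstep : 4 * ℓ ^ 2 * ρ ^ 2 + (β⁻¹ + δhat) * ρ + (mD * ρ * ‖x - g‖) ^ 2 ≤ θbar) :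
    (2 - θbar) / (4 * ρmax) * ‖x - g‖ ^ 2 + ρmin / 2 * ‖y - w‖ ^ 2 ≤
      ⟪g - x, y - w⟫ - 1 / (4 * β) * ‖x - g‖ ^ 2 := by
  have hρ : 0 < ρ := h1.trans_le h2
  set n := ‖x - g‖ with hn
  have hres : ‖ρ • (y - w) - (g - x)‖ ≤ ρ * (ℓ * n + mD / 2 * n ^ 2) := by
    have hyw : y - w = ρ⁻¹ • (g - x) + ((B x - B g) + (D x - (D g + D' g (x - g)))) := by
      rw [hy]; abel
    rw [hyw, smul_add, smul_inv_smul₀ hρ.ne', add_sub_cancel_left, norm_smul,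
      Real.norm_of_nonneg hρ.le]
    gcongr
    exact (norm_add_le _ _).trans (add_le_add (hB x g) (norm_sub_linearization_le hD hDlip g x))
  have hinner := le_inner_of_norm_smul_sub_le hρ hres
  rw [norm_sub_rev, ← hn] at hinner
  have hcoef := line_search_bound_le hρ hδ.le hstep
  calc (2 - θbar) / (4 * ρmax) * n ^ 2 + ρmin / 2 * ‖y - w‖ ^ 2
      ≤ (2 - θbar) / (4 * ρ) * n ^ 2 + ρ / 2 * ‖y - w‖ ^ 2 := by
        gcongr
    _ ≤ ⟪g - x, y - w⟫ - 1 / (4 * β) * n ^ 2 := by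
        linarith [show 1 / (4 * β) * n ^ 2 = β⁻¹ / 4 * n ^ 2 by ring]

/-- Lower bound on the per-operator contribution
`Δ = ⟪g − x, y − w⟫ − (1/(4β))‖x − g‖²` for a proximal-Newton step `(x, y)` whose stepsize `ρ`
satisfies the line-search upper bound `4ℓ²ρ² + (β⁻¹ + δ̂)ρ + (mρ‖x − g‖)² ≤ θ̄` with
`0 < θ̄ < 2` and `0 < ρ_min ≤ ρ ≤ ρ_max`. -/
theorem delta_lower_bound_proximal_newton {H : Type*} [NormedAddCommGroup H]
    [InnerProductSpace ℝ H]
    (B : H → H) (ℓ : ℝ) (hℓ : 0 ≤ ℓ) (hB : ∀ x y, ‖B x - B y‖ ≤ ℓ * ‖x - y‖)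
    (D : H → H) (D' : H → H →L[ℝ] H) (hD : ∀ x, HasFDerivAt D (D' x) x)
    (mD : ℝ) (hmD : 0 ≤ mD) (hDlip : ∀ x y, ‖D' x - D' y‖ ≤ mD * ‖x - y‖)
    (β δhat θbar : ℝ) (hβ : 0 < β) (hδ : 0 < δhat) (hθ0 : 0 < θbar) (hθ2 : θbar < 2)
    (ρmin ρmax ρ : ℝ) (h1 : 0 < ρmin) (h2 : ρmin ≤ ρ) (h3 : ρ ≤ ρmax)
    (g w x : H) (y : H)
    (hy : y = ρ⁻¹ • (g - x) + w + (B x - B g) + (D x - (D g + D' g (x - g))))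
    (hstep : 4 * ℓ ^ 2 * ρ ^ 2 + (β⁻¹ + δhat) * ρ + (mD * ρ * ‖x - g‖) ^ 2 ≤ θbar) :
    (2 - θbar) / (4 * ρmax) * ‖x - g‖ ^ 2 + ρmin / 2 * ‖y - w‖ ^ 2 ≤
      ⟪g - x, y - w⟫ - 1 / (4 * β) * ‖x - g‖ ^ 2 :=
  delta_lower_bound_proximal_newton_general B ℓ hB D D' hD mD hDlip β δhat θbar hδ hθ2 ρmin ρmax ρ
    h1 h2 h3 g w x y hy hstep
end

section
/- Let H be a real Hilbert space and T : H → Set H a monotone set-valued operator. Let z ∈ H, 0 < μ < ρ, and let x_μ, x_ρ ∈ H satisfy z − x_μ ∈ μ T(x_μ) and z − x_ρ ∈ ρ T(x_ρ). Define φ(λ) := λ‖x_λ − z‖ for λ ∈ {μ, ρ}. Then (ρ/μ) φ(μ) ≤ φ(ρ) ≤ (ρ/μ)² φ(μ), i.e. (ρ/μ)·μ‖x_μ − z‖ ≤ ρ‖x_ρ − z‖ ≤ (ρ/μ)²·μ‖x_μ − z‖. -/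
open scoped RealInnerProductSpace

/-- Monteiro–Svaiter. For a monotone set-valued `T`, `0 < μ < ρ`, and
resolvents `x_μ = J_{μT}(z)`, `x_ρ = J_{ρT}(z)`, with `φ(λ) := λ‖x_λ − z‖` one has
`(ρ/μ) φ(μ) ≤ φ(ρ) ≤ (ρ/μ)² φ(μ)`. -/
theorem resolvent_scaling_bounds {H : Type*} [NormedAddCommGroup H] [InnerProductSpace ℝ H]
    (T : H → Set H)
    (hT : ∀ x y u v, u ∈ T x → v ∈ T y → 0 ≤ ⟪x - y, u - v⟫)
    (z : H) (μ ρ : ℝ) (hμ : 0 < μ) (hμρ : μ < ρ)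
    (xμ xρ : H)
    (hxμ : ∃ v ∈ T xμ, z - xμ = μ • v)
    (hxρ : ∃ v ∈ T xρ, z - xρ = ρ • v) :
    ρ / μ * (μ * ‖xμ - z‖) ≤ ρ * ‖xρ - z‖ ∧
      ρ * ‖xρ - z‖ ≤ (ρ / μ) ^ 2 * (μ * ‖xμ - z‖) := by
  obtain ⟨u, hu, hau⟩ := hxμ
  obtain ⟨v, hv, hbv⟩ := hxρ
  have hρ : (0:ℝ) < ρ := hμ.trans hμρ
  set a := z - xμ with ha
  set b := z - xρ with hb
  have hu' : u = μ⁻¹ • a := by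
    rw [hau, smul_smul, inv_mul_cancel₀ hμ.ne', one_smul]
  have hv' : v = ρ⁻¹ • b := by
    rw [hbv, smul_smul, inv_mul_cancel₀ hρ.ne', one_smul]
  have hmono := hT xμ xρ u v hu hv
  have hab : xμ - xρ = b - a := by rw [ha, hb]; abel
  rw [hab, hu', hv'] at hmono
  have hexp : ⟪b - a, μ⁻¹ • a - ρ⁻¹ • b⟫ =
      μ⁻¹ * ⟪a, b⟫ - ρ⁻¹ * ‖b‖ ^ 2 - μ⁻¹ * ‖a‖ ^ 2 + ρ⁻¹ * ⟪a, b⟫ := by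
    rw [inner_sub_left, inner_sub_right, inner_sub_right, real_inner_smul_right,
      real_inner_smul_right, real_inner_smul_right, real_inner_smul_right,
      real_inner_self_eq_norm_sq, real_inner_self_eq_norm_sq, real_inner_comm b a]
    ring
  rw [hexp] at hmono
  have hcs : ⟪a, b⟫ ≤ ‖a‖ * ‖b‖ := real_inner_le_norm a b
  have hna : 0 ≤ ‖a‖ := norm_nonneg a
  have hnb : 0 ≤ ‖b‖ := norm_nonneg b
  -- key inequality: (ρ‖a‖ - μ‖b‖)(‖a‖ - ‖b‖) ≤ 0
  have key : ρ * ‖a‖ ^ 2 + μ * ‖b‖ ^ 2 ≤ (ρ + μ) * (‖a‖ * ‖b‖) := by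
    have h1 : μ⁻¹ * ‖a‖ ^ 2 + ρ⁻¹ * ‖b‖ ^ 2 ≤ (μ⁻¹ + ρ⁻¹) * (‖a‖ * ‖b‖) := by
      nlinarith [hmono, hcs, inv_pos.mpr hμ, inv_pos.mpr hρ]
    have h2 := mul_le_mul_of_nonneg_left h1 (le_of_lt (mul_pos hμ hρ))
    have hμ' := hμ.ne'
    have hρ' := hρ.ne'
    field_simp at h2
    nlinarith [h2]
  have h1 : ‖a‖ ≤ ‖b‖ := by
    by_contra h
    push_neg at h
    nlinarith [key, mul_pos (sub_pos.mpr hμρ) (sub_pos.mpr h),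
      mul_nonneg hna hnb, sq_nonneg (‖a‖ - ‖b‖)]
  have h2 : μ * ‖b‖ ≤ ρ * ‖a‖ := by
    by_contra h
    push_neg at h
    have hba : ‖a‖ < ‖b‖ := by
      have h3 : (0:ℝ) ≤ (ρ - μ) * ‖a‖ := mul_nonneg (sub_pos.mpr hμρ).le hna
      have h4 : μ * ‖a‖ < μ * ‖b‖ := by nlinarith
      exact lt_of_mul_lt_mul_left h4 hμ.le
    nlinarith [key, mul_pos (sub_pos.mpr h) (sub_pos.mpr hba)]
  have hna' : ‖xμ - z‖ = ‖a‖ := by rw [ha, norm_sub_rev]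
  have hnb' : ‖xρ - z‖ = ‖b‖ := by rw [hb, norm_sub_rev]
  rw [hna', hnb']
  constructor
  · have heq : ρ / μ * (μ * ‖a‖) = ρ * ‖a‖ := by
      field_simp
    rw [heq]
    exact mul_le_mul_of_nonneg_left h1 hρ.le
  · have heq : (ρ / μ) ^ 2 * (μ * ‖a‖) = ρ / μ * (ρ * ‖a‖) := by
      field_simp
    rw [heq]
    have h3 : ρ * ‖b‖ = ρ / μ * (μ * ‖b‖) := by
      field_simp
    rw [h3]
    refine mul_le_mul_of_nonneg_left h2 ?_
    positivity
end

section
/- Let H be a real Hilbert space, T : H → Set H a monotone set-valued operator, a, b ≥ 0, and z ∈ H. Let 0 < μ < ρ and x_μ, x_ρ ∈ H satisfy z − x_μ ∈ μ T(x_μ) and z − x_ρ ∈ ρ T(x_ρ). Define ψ(λ) := aλ² + bλ + (λ‖x_λ − z‖)² for λ ∈ {μ, ρ}. Then (ρ/μ) ψ(μ) ≤ ψ(ρ) ≤ (ρ/μ)⁴ ψ(μ). -/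
open scoped RealInnerProductSpace

/-- For a monotone set-valued `T`, `a, b ≥ 0`, `0 < μ < ρ`, and resolvents
`x_μ = J_{μT}(z)`, `x_ρ = J_{ρT}(z)`, with `ψ(λ) := aλ² + bλ + (λ‖x_λ − z‖)²` one has
`(ρ/μ) ψ(μ) ≤ ψ(ρ) ≤ (ρ/μ)⁴ ψ(μ)`. -/
theorem psi_scaling_bounds {H : Type*} [NormedAddCommGroup H] [InnerProductSpace ℝ H]
    (T : H → Set H)
    (hT : ∀ x y u v, u ∈ T x → v ∈ T y → 0 ≤ ⟪x - y, u - v⟫)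
    (a b : ℝ) (ha : 0 ≤ a) (hb : 0 ≤ b)
    (z : H) (μ ρ : ℝ) (hμ : 0 < μ) (hμρ : μ < ρ)
    (xμ xρ : H)
    (hxμ : ∃ v ∈ T xμ, z - xμ = μ • v)
    (hxρ : ∃ v ∈ T xρ, z - xρ = ρ • v) :
    ρ / μ * (a * μ ^ 2 + b * μ + (μ * ‖xμ - z‖) ^ 2) ≤
        a * ρ ^ 2 + b * ρ + (ρ * ‖xρ - z‖) ^ 2 ∧
      a * ρ ^ 2 + b * ρ + (ρ * ‖xρ - z‖) ^ 2 ≤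
        (ρ / μ) ^ 4 * (a * μ ^ 2 + b * μ + (μ * ‖xμ - z‖) ^ 2) := by

  obtain ⟨u, hu, hzu⟩ := hxμ
  obtain ⟨v, hv, hzv⟩ := hxρ
  have hρ : 0 < ρ := hμ.trans hμρ
  have hmono := hT xμ xρ u v hu hv
  have hxuv : xμ - xρ = ρ • v - μ • u := by
    rw [← hzu, ← hzv]; abel
  rw [hxuv] at hmono
  have hexp : ⟪ρ • v - μ • u, u - v⟫
      = (ρ + μ) * ⟪u, v⟫ - ρ * ‖v‖ ^ 2 - μ * ‖u‖ ^ 2 := by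
    rw [inner_sub_left, inner_sub_right, inner_sub_right,
      real_inner_smul_left, real_inner_smul_left, real_inner_smul_left, real_inner_smul_left,
      real_inner_self_eq_norm_sq, real_inner_self_eq_norm_sq, real_inner_comm v u]
    ring
  rw [hexp] at hmono
  have hcs : ⟪u, v⟫ ≤ ‖u‖ * ‖v‖ := real_inner_le_norm u v
  have key : (‖v‖ - ‖u‖) * (ρ * ‖v‖ - μ * ‖u‖) ≤ 0 := by nlinarith
  have hU : 0 ≤ ‖u‖ := norm_nonneg u
  have hV : 0 ≤ ‖v‖ := norm_nonneg v
  have h1 : ‖v‖ ≤ ‖u‖ := by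
    by_contra h
    push_neg at h
    have hVpos : 0 < ‖v‖ := hU.trans_lt h
    have hf : 0 < ρ * ‖v‖ - μ * ‖u‖ := by nlinarith
    nlinarith [mul_pos (sub_pos.2 h) hf]
  have h2 : μ * ‖u‖ ≤ ρ * ‖v‖ := by
    by_contra h
    push_neg at h
    rcases le_or_gt ‖u‖ ‖v‖ with hc | hc
    · nlinarith
    · nlinarith [mul_pos (sub_pos.2 hc) (sub_pos.2 h)]
  have hnμ : ‖xμ - z‖ = μ * ‖u‖ := by
    have : xμ - z = -(μ • u) := by rw [← hzu]; abel
    rw [this, norm_neg, norm_smul, Real.norm_of_nonneg hμ.le]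
  have hnρ : ‖xρ - z‖ = ρ * ‖v‖ := by
    have : xρ - z = -(ρ • v) := by rw [← hzv]; abel
    rw [this, norm_neg, norm_smul, Real.norm_of_nonneg hρ.le]
  rw [hnμ, hnρ]
  constructor
  · rw [div_mul_eq_mul_div, div_le_iff₀ hμ]
    have h2sq : (μ * ‖u‖) ^ 2 ≤ (ρ * ‖v‖) ^ 2 :=
      pow_le_pow_left₀ (by positivity) h2 2
    nlinarith [mul_le_mul_of_nonneg_left h2sq (by positivity : (0:ℝ) ≤ ρ * μ ^ 2),
      mul_nonneg (mul_nonneg ha (sub_nonneg.2 hμρ.le)) (by positivity : (0:ℝ) ≤ μ * ρ),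
      mul_nonneg (sub_nonneg.2 hμρ.le) (by positivity : (0:ℝ) ≤ ρ ^ 3 * μ * ‖v‖ ^ 2)]
  · rw [div_pow, div_mul_eq_mul_div, le_div_iff₀ (by positivity : (0:ℝ) < μ ^ 4)]
    have hρ2 : μ ^ 2 ≤ ρ ^ 2 := by nlinarith
    have hρ3 : μ ^ 3 ≤ ρ ^ 3 := by nlinarith
    have t1 := mul_le_mul_of_nonneg_left hρ2 (show (0:ℝ) ≤ a * μ ^ 2 * ρ ^ 2 by positivity)
    have t2 := mul_le_mul_of_nonneg_left hρ3 (show (0:ℝ) ≤ b * μ * ρ by positivity)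
    have t3 := mul_le_mul_of_nonneg_left (mul_le_mul h1 h1 hV hU)
        (show (0:ℝ) ≤ ρ ^ 4 * μ ^ 4 by positivity)
    linarith [t1, t2, t3]
end

section
/- Let H be a real Hilbert space, T : H → Set H a monotone set-valued operator, a, b ≥ 0, and z ∈ H with 0 ∉ T(z). Assume that for every ρ > 0 there exists a (necessarily unique) point x_ρ ∈ H with z − x_ρ ∈ ρ T(x_ρ), and define ψ(ρ) := aρ² + bρ + (ρ‖x_ρ − z‖)². Then: (i) ψ(ρ) > 0 for every ρ > 0; (ii) ψ is strictly increasing and continuous on (0, ∞); (iii) ψ(ρ) → 0 as ρ → 0⁺ and ψ(ρ) → ∞ as ρ → ∞. -/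
open scoped RealInnerProductSpace
open Set Filter Topology

/-!
Write `f ρ = ‖x_ρ − z‖ = ρ‖v_ρ‖` with `v_ρ ∈ T(x_ρ)`. Monotonicity of `T` tested at `x_ρ, x_μ`,
combined with Cauchy–Schwarz, gives `(f ρ − f μ)(μ f ρ − ρ f μ) ≤ 0`. Hence `f` is nondecreasing
and `f ρ / ρ` is nonincreasing; together these make `f` locally Lipschitz on `(0, ∞)`.
Since `0 ∉ T z`, `f` is positive, so `ρ f ρ` is strictly increasing, and all claims about `ψ`
follow from these properties of `f`.
-/

/-- The stepsize-selection function `ψ(ρ) := aρ² + bρ + (ρ‖x_ρ − z‖)²`, where `x_ρ = J_{ρT}(z)`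
is given by the selection `x : ℝ → H`. -/
noncomputable def psiFun {H : Type*} [NormedAddCommGroup H] (a b : ℝ) (z : H) (x : ℝ → H)
    (ρ : ℝ) : ℝ :=
  a * ρ ^ 2 + b * ρ + (ρ * ‖x ρ - z‖) ^ 2

section RealFunction

variable {f : ℝ → ℝ}

theorem monotoneOn_Ioi_of_sub_mul_sub_nonpos (hf : ∀ ρ, 0 ≤ f ρ)
    (h : ∀ ρ μ, 0 < ρ → 0 < μ → (f ρ - f μ) * (μ * f ρ - ρ * f μ) ≤ 0) :
    MonotoneOn f (Ioi 0) := by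
  intro ρ hρ μ hμ hle
  by_contra! hlt
  have hsecond : 0 < μ * f ρ - ρ * f μ := by
    nlinarith [mul_nonneg (sub_nonneg.2 hle) (hf ρ), mul_pos (mem_Ioi.1 hρ) (sub_pos.2 hlt)]
  nlinarith [h ρ μ hρ hμ, mul_pos (sub_pos.2 hlt) hsecond]

theorem antitoneOn_div_Ioi_of_sub_mul_sub_nonpos (hf : ∀ ρ, 0 ≤ f ρ)
    (h : ∀ ρ μ, 0 < ρ → 0 < μ → (f ρ - f μ) * (μ * f ρ - ρ * f μ) ≤ 0) :
    AntitoneOn (fun ρ => f ρ / ρ) (Ioi 0) := by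
  intro ρ hρ μ hμ hle
  rw [mem_Ioi] at hρ hμ
  rw [div_le_div_iff₀ hμ hρ]
  by_contra! hlt
  have hfirst : f ρ < f μ := by nlinarith [mul_nonneg (sub_nonneg.2 hle) (hf ρ)]
  nlinarith [h ρ μ hρ hμ, mul_pos (sub_pos.2 hfirst) (sub_pos.2 hlt)]

theorem abs_sub_le_of_monotoneOn_of_antitoneOn_div (hmono : MonotoneOn f (Ioi 0))
    (hanti : AntitoneOn (fun ρ => f ρ / ρ) (Ioi 0)) {ρ σ : ℝ} (hρ : 0 < ρ) (hσ : 0 < σ) :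
    |f σ - f ρ| ≤ f ρ / ρ * |σ - ρ| := by
  have hslope : f ρ / ρ * ρ = f ρ := div_mul_cancel₀ _ hρ.ne'
  rcases le_total σ ρ with hle | hle
  · have hlower : f ρ / ρ * σ ≤ f σ := (le_div_iff₀ hσ).1 (hanti hσ hρ hle)
    rw [abs_of_nonpos (sub_nonpos.2 (hmono hσ hρ hle)), abs_of_nonpos (sub_nonpos.2 hle)]
    linarith
  · have hupper : f σ ≤ f ρ / ρ * σ := (div_le_iff₀ hσ).1 (hanti hρ hσ hle)
    rw [abs_of_nonneg (sub_nonneg.2 (hmono hρ hσ hle)), abs_of_nonneg (sub_nonneg.2 hle)]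
    linarith

theorem continuousOn_Ioi_of_monotoneOn_of_antitoneOn_div (hmono : MonotoneOn f (Ioi 0))
    (hanti : AntitoneOn (fun ρ => f ρ / ρ) (Ioi 0)) : ContinuousOn f (Ioi 0) := by
  intro ρ hρ
  refine (continuousAt_of_locally_lipschitz hρ (f ρ / ρ) fun σ hσ => ?_).continuousWithinAt
  have hσpos : 0 < σ := by
    rw [Real.dist_eq] at hσ
    linarith [neg_abs_le (σ - ρ)]
  simpa only [Real.dist_eq] using abs_sub_le_of_monotoneOn_of_antitoneOn_div hmono hanti hρ hσpos

end RealFunction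

theorem norm_sub_mul_sub_nonpos_of_inner_nonneg {H : Type*} [NormedAddCommGroup H]
    [InnerProductSpace ℝ H] {u w : H} {ρ μ : ℝ} (hρ : 0 ≤ ρ) (hμ : 0 ≤ μ)
    (h : 0 ≤ ⟪w - u, μ • u - ρ • w⟫) :
    (‖u‖ - ‖w‖) * (μ * ‖u‖ - ρ * ‖w‖) ≤ 0 := by
  have hexpand : ⟪w - u, μ • u - ρ • w⟫ = (μ + ρ) * ⟪u, w⟫ - μ * ‖u‖ ^ 2 - ρ * ‖w‖ ^ 2 := by
    simp only [inner_sub_left, inner_sub_right, real_inner_smul_right, real_inner_self_eq_norm_sq,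
      real_inner_comm u w]
    ring
  have hcs : (μ + ρ) * ⟪u, w⟫ ≤ (μ + ρ) * (‖u‖ * ‖w‖) :=
    mul_le_mul_of_nonneg_left (real_inner_le_norm u w) (add_nonneg hμ hρ)
  nlinarith

section Resolvent

variable {H : Type*} [NormedAddCommGroup H] [InnerProductSpace ℝ H] {T : H → Set H} {z : H}
  {x : ℝ → H}

theorem norm_resolvent_sub_pos (hz : (0 : H) ∉ T z)
    (hx : ∀ ρ > (0 : ℝ), ∃ v ∈ T (x ρ), z - x ρ = ρ • v) {ρ : ℝ} (hρ : 0 < ρ) :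
    0 < ‖x ρ - z‖ := by
  obtain ⟨v, hv, hzx⟩ := hx ρ hρ
  rw [norm_pos_iff, sub_ne_zero]
  rintro hxz
  rw [hxz, sub_self, eq_comm, smul_eq_zero] at hzx
  exact hz (hxz ▸ hzx.resolve_left hρ.ne' ▸ hv)

theorem norm_resolvent_sub_mul_sub_nonpos
    (hT : ∀ x y u v, u ∈ T x → v ∈ T y → 0 ≤ ⟪x - y, u - v⟫)
    (hx : ∀ ρ > (0 : ℝ), ∃ v ∈ T (x ρ), z - x ρ = ρ • v) {ρ μ : ℝ} (hρ : 0 < ρ) (hμ : 0 < μ) :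
    (‖x ρ - z‖ - ‖x μ - z‖) * (μ * ‖x ρ - z‖ - ρ * ‖x μ - z‖) ≤ 0 := by
  obtain ⟨vρ, hvρ, hzρ⟩ := hx ρ hρ
  obtain ⟨vμ, hvμ, hzμ⟩ := hx μ hμ
  rw [norm_sub_rev (x ρ), norm_sub_rev (x μ)]
  refine norm_sub_mul_sub_nonpos_of_inner_nonneg hρ.le hμ.le ?_
  have hdiff : (z - x μ) - (z - x ρ) = x ρ - x μ := by abel
  have hcomb : μ • (z - x ρ) - ρ • (z - x μ) = (ρ * μ) • (vρ - vμ) := by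
    rw [hzρ, hzμ, smul_sub, smul_smul, smul_smul, mul_comm μ ρ]
  rw [hdiff, hcomb, real_inner_smul_right]
  exact mul_nonneg (mul_pos hρ hμ).le (hT _ _ _ _ hvρ hvμ)

end Resolvent

section Psi

variable {H : Type*} [NormedAddCommGroup H] {a b : ℝ} {z : H} {x : ℝ → H}

theorem psiFun_pos (ha : 0 ≤ a) (hb : 0 ≤ b) {ρ : ℝ} (hρ : 0 < ρ) (hx : 0 < ‖x ρ - z‖) :
    0 < psiFun a b z x ρ := by
  unfold psiFun
  positivity

theorem strictMonoOn_psiFun (ha : 0 ≤ a) (hb : 0 ≤ b) (hpos : ∀ ρ > (0 : ℝ), 0 < ‖x ρ - z‖)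
    (hmono : MonotoneOn (fun ρ => ‖x ρ - z‖) (Ioi 0)) :
    StrictMonoOn (psiFun a b z x) (Ioi 0) := by
  intro ρ hρ μ hμ hlt
  rw [mem_Ioi] at hρ hμ
  have hprod : ρ * ‖x ρ - z‖ < μ * ‖x μ - z‖ :=
    calc ρ * ‖x ρ - z‖ < μ * ‖x ρ - z‖ := mul_lt_mul_of_pos_right hlt (hpos ρ hρ)
      _ ≤ μ * ‖x μ - z‖ := mul_le_mul_of_nonneg_left (hmono hρ hμ hlt.le) hμ.le
  have hsq : (ρ * ‖x ρ - z‖) ^ 2 < (μ * ‖x μ - z‖) ^ 2 := by gcongr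
  have ha' : a * ρ ^ 2 ≤ a * μ ^ 2 := by gcongr
  have hb' : b * ρ ≤ b * μ := by gcongr
  unfold psiFun
  linarith

theorem continuousOn_psiFun (hc : ContinuousOn (fun ρ => ‖x ρ - z‖) (Ioi 0)) :
    ContinuousOn (psiFun a b z x) (Ioi 0) := by
  unfold psiFun
  fun_prop

theorem tendsto_psiFun_nhdsGT_zero (ha : 0 ≤ a) (hb : 0 ≤ b)
    (hmono : MonotoneOn (fun ρ => ‖x ρ - z‖) (Ioi 0)) :
    Tendsto (psiFun a b z x) (𝓝[>] 0) (𝓝 0) := by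
  have hupper : Tendsto (fun ρ : ℝ => a * ρ ^ 2 + b * ρ + (ρ * ‖x 1 - z‖) ^ 2) (𝓝[>] 0) (𝓝 0) := by
    have hcont : Continuous fun ρ : ℝ => a * ρ ^ 2 + b * ρ + (ρ * ‖x 1 - z‖) ^ 2 := by fun_prop
    simpa using (hcont.tendsto 0).mono_left nhdsWithin_le_nhds
  refine tendsto_of_tendsto_of_tendsto_of_le_of_le' tendsto_const_nhds hupper ?_ ?_
  · filter_upwards [self_mem_nhdsWithin] with ρ hρ
    unfold psiFun
    have : 0 < ρ := hρ
    positivity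
  · filter_upwards [Ioo_mem_nhdsGT one_pos] with ρ ⟨hρ, hρ1⟩
    have hle : ρ * ‖x ρ - z‖ ≤ ρ * ‖x 1 - z‖ :=
      mul_le_mul_of_nonneg_left (hmono hρ (mem_Ioi.2 one_pos) hρ1.le) hρ.le
    have hsq : (ρ * ‖x ρ - z‖) ^ 2 ≤ (ρ * ‖x 1 - z‖) ^ 2 := by gcongr
    unfold psiFun
    linarith

theorem tendsto_psiFun_atTop (ha : 0 ≤ a) (hb : 0 ≤ b) (hpos : 0 < ‖x 1 - z‖)
    (hmono : MonotoneOn (fun ρ => ‖x ρ - z‖) (Ioi 0)) :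
    Tendsto (psiFun a b z x) atTop atTop := by
  have hquad : Tendsto (fun ρ : ℝ => ‖x 1 - z‖ ^ 2 * ρ ^ 2) atTop atTop :=
    (tendsto_pow_atTop two_ne_zero).const_mul_atTop (by positivity)
  refine tendsto_atTop_mono' _ ?_ hquad
  filter_upwards [eventually_ge_atTop 1] with ρ hρ
  have hρ0 : 0 < ρ := one_pos.trans_le hρ
  have hle : ρ * ‖x 1 - z‖ ≤ ρ * ‖x ρ - z‖ :=
    mul_le_mul_of_nonneg_left (hmono (mem_Ioi.2 one_pos) hρ0 hρ) hρ0.le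
  have hsq : (ρ * ‖x 1 - z‖) ^ 2 ≤ (ρ * ‖x ρ - z‖) ^ 2 := by gcongr
  have : 0 ≤ a * ρ ^ 2 + b * ρ := by positivity
  unfold psiFun
  linarith

end Psi

/-- If `T` is monotone, `0 ∉ T(z)`, and for each `ρ > 0` the resolvent
`x ρ = J_{ρT}(z)` exists, then `ψ(ρ) := aρ² + bρ + (ρ‖x ρ − z‖)²` is positive, strictly
increasing and continuous on `(0, ∞)`, tends to `0` as `ρ → 0⁺` and to `∞` as `ρ → ∞`. -/
theorem psi_pos_strictMono_continuous_tendsto {H : Type*} [NormedAddCommGroup H]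
    [InnerProductSpace ℝ H]
    (T : H → Set H)
    (hT : ∀ x y u v, u ∈ T x → v ∈ T y → 0 ≤ ⟪x - y, u - v⟫)
    (a b : ℝ) (ha : 0 ≤ a) (hb : 0 ≤ b)
    (z : H) (hz : (0 : H) ∉ T z)
    (x : ℝ → H) (hx : ∀ ρ > (0 : ℝ), ∃ v ∈ T (x ρ), z - x ρ = ρ • v) :
    (∀ ρ > (0 : ℝ), 0 < psiFun a b z x ρ) ∧
      StrictMonoOn (psiFun a b z x) (Set.Ioi 0) ∧
      ContinuousOn (psiFun a b z x) (Set.Ioi 0) ∧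
      Filter.Tendsto (psiFun a b z x) (nhdsWithin 0 (Set.Ioi 0)) (nhds 0) ∧
      Filter.Tendsto (psiFun a b z x) Filter.atTop Filter.atTop := by
  have hpos : ∀ ρ > (0 : ℝ), 0 < ‖x ρ - z‖ := fun ρ hρ => norm_resolvent_sub_pos hz hx hρ
  have hkey : ∀ ρ μ, 0 < ρ → 0 < μ →
      (‖x ρ - z‖ - ‖x μ - z‖) * (μ * ‖x ρ - z‖ - ρ * ‖x μ - z‖) ≤ 0 :=
    fun ρ μ hρ hμ => norm_resolvent_sub_mul_sub_nonpos hT hx hρ hμ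
  have hmono := monotoneOn_Ioi_of_sub_mul_sub_nonpos (fun ρ => norm_nonneg _) hkey
  have hanti := antitoneOn_div_Ioi_of_sub_mul_sub_nonpos (fun ρ => norm_nonneg _) hkey
  exact ⟨fun ρ hρ => psiFun_pos ha hb hρ (hpos ρ hρ), strictMonoOn_psiFun ha hb hpos hmono,
    continuousOn_psiFun (continuousOn_Ioi_of_monotoneOn_of_antitoneOn_div hmono hanti),
    tendsto_psiFun_nhdsGT_zero ha hb hmono, tendsto_psiFun_atTop ha hb (hpos 1 one_pos) hmono⟩
end

section
/- Let H be a real Hilbert space, T : H → Set H a monotone set-valued operator, a, b ≥ 0, and z ∈ H with 0 ∉ T(z). Assume that for every ρ > 0 there exists a unique x_ρ ∈ H with z − x_ρ ∈ ρ T(x_ρ), and define ψ(ρ) := aρ² + bρ + (ρ‖x_ρ − z‖)². Let 0 < θ₋ < θ₊ < ∞ and assume the set {ρ > 0 : θ₋ ≤ ψ(ρ) ≤ θ₊} is nonempty. Then this set is a closed interval [ρ₋, ρ₊] with ψ(ρ₋) = θ₋ and ψ(ρ₊) = θ₊, and moreover ρ₊/ρ₋ ≥ (θ₊/θ₋)^{1/4}.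 -/
open scoped RealInnerProductSpace

/-- Key geometric inequality from monotonicity of `T`. -/
lemma mono_key {H : Type*} [NormedAddCommGroup H] [InnerProductSpace ℝ H]
    (T : H → Set H)
    (hT : ∀ x y u v, u ∈ T x → v ∈ T y → 0 ≤ ⟪x - y, u - v⟫)
    (z : H) (x : ℝ → H) (hx : ∀ ρ > (0 : ℝ), ∃ v ∈ T (x ρ), z - x ρ = ρ • v)
    (ρ σ : ℝ) (hρ : 0 < ρ) (hσ : 0 < σ) :
    ρ * ‖x ρ - x σ‖ ^ 2 ≤ (σ - ρ) * ⟪x ρ - x σ, z - x ρ⟫ := by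
  obtain ⟨vρ, hvρ, heρ⟩ := hx ρ hρ
  obtain ⟨vσ, hvσ, heσ⟩ := hx σ hσ
  have hvρ' : vρ = ρ⁻¹ • (z - x ρ) := by
    rw [heρ, smul_smul, inv_mul_cancel₀ hρ.ne', one_smul]
  have hvσ' : vσ = σ⁻¹ • (z - x σ) := by
    rw [heσ, smul_smul, inv_mul_cancel₀ hσ.ne', one_smul]
  have h0 := hT (x ρ) (x σ) vρ vσ hvρ hvσ
  rw [hvρ', hvσ'] at h0
  have h1 : 0 ≤ ρ * σ * ⟪x ρ - x σ, ρ⁻¹ • (z - x ρ) - σ⁻¹ • (z - x σ)⟫ :=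
    mul_nonneg (by positivity) h0
  rw [inner_sub_right, real_inner_smul_right, real_inner_smul_right] at h1
  have hB : ⟪x ρ - x σ, z - x σ⟫ = ⟪x ρ - x σ, z - x ρ⟫ + ‖x ρ - x σ‖ ^ 2 := by
    have h : z - x σ = (z - x ρ) + (x ρ - x σ) := by abel
    rw [h, inner_add_right, real_inner_self_eq_norm_sq]
  rw [hB] at h1
  set A := ⟪x ρ - x σ, z - x ρ⟫ with hA
  set D := ‖x ρ - x σ‖ ^ 2 with hD
  have e : ρ * σ * (ρ⁻¹ * A - σ⁻¹ * (A + D)) = σ * A - ρ * (A + D) := by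
    field_simp
  rw [e] at h1
  linarith

set_option maxHeartbeats 1000000 in
/-- Under the hypotheses of the stepsize-selection lemma, if the set of
`ρ > 0` with `θ₋ ≤ ψ(ρ) ≤ θ₊` is nonempty, then it is a closed interval `[ρ₋, ρ₊]` with
`ψ(ρ₋) = θ₋`, `ψ(ρ₊) = θ₊` and `ρ₊/ρ₋ ≥ (θ₊/θ₋)^(1/4)`. -/
theorem stepsize_set_is_interval {H : Type*} [NormedAddCommGroup H] [InnerProductSpace ℝ H]
    (T : H → Set H)
    (hT : ∀ x y u v, u ∈ T x → v ∈ T y → 0 ≤ ⟪x - y, u - v⟫)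
    (a b : ℝ) (ha : 0 ≤ a) (hb : 0 ≤ b)
    (z : H) (hz : (0 : H) ∉ T z)
    (x : ℝ → H) (hx : ∀ ρ > (0 : ℝ), ∃ v ∈ T (x ρ), z - x ρ = ρ • v)
    (hxuniq : ∀ ρ > (0 : ℝ), ∀ x' : H, (∃ v ∈ T x', z - x' = ρ • v) → x' = x ρ)
    (θm θp : ℝ) (hθm : 0 < θm) (hθmp : θm < θp)
    (hne : {ρ : ℝ | 0 < ρ ∧ θm ≤ psiFun a b z x ρ ∧ psiFun a b z x ρ ≤ θp}.Nonempty) :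
    ∃ ρm ρp : ℝ, 0 < ρm ∧ ρm ≤ ρp ∧
      {ρ : ℝ | 0 < ρ ∧ θm ≤ psiFun a b z x ρ ∧ psiFun a b z x ρ ≤ θp} = Set.Icc ρm ρp ∧
      psiFun a b z x ρm = θm ∧ psiFun a b z x ρp = θp ∧
      (θp / θm) ^ ((1 : ℝ) / 4) ≤ ρp / ρm := by
  -- positivity of ‖x ρ - z‖
  have hspos : ∀ ρ : ℝ, 0 < ρ → 0 < ‖x ρ - z‖ := by
    intro ρ hρ
    rw [norm_pos_iff, sub_ne_zero]
    intro hxz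
    obtain ⟨v, hv, he⟩ := hx ρ hρ
    have h0 : ρ • v = 0 := by rw [← he, hxz, sub_self]
    rcases smul_eq_zero.mp h0 with h | h
    · exact absurd h hρ.ne'
    · rw [hxz, h] at hv; exact hz hv
  -- basic monotonicity facts
  have hBmono : ∀ ρ σ : ℝ, 0 < ρ → ρ ≤ σ →
      ‖x ρ - z‖ ≤ ‖x σ - z‖ ∧ ρ * ‖x σ - z‖ ≤ σ * ‖x ρ - z‖ := by
    intro ρ σ hρ hρσ
    have hσ : 0 < σ := hρ.trans_le hρσ
    have hk := mono_key T hT z x hx ρ σ hρ hσ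
    have hdd : x ρ - x σ = (z - x σ) - (z - x ρ) := by abel
    have hd2 : ‖x ρ - x σ‖ ^ 2
        = ‖x σ - z‖ ^ 2 - 2 * ⟪z - x σ, z - x ρ⟫ + ‖x ρ - z‖ ^ 2 := by
      rw [hdd, norm_sub_sq_real, norm_sub_rev z (x σ), norm_sub_rev z (x ρ)]
    have hip : ⟪x ρ - x σ, z - x ρ⟫ = ⟪z - x σ, z - x ρ⟫ - ‖x ρ - z‖ ^ 2 := by
      rw [hdd, inner_sub_left, real_inner_self_eq_norm_sq, norm_sub_rev z (x ρ)]
    rw [hd2, hip] at hk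
    have hCS : ⟪z - x σ, z - x ρ⟫ ≤ ‖x σ - z‖ * ‖x ρ - z‖ := by
      calc ⟪z - x σ, z - x ρ⟫ ≤ ‖z - x σ‖ * ‖z - x ρ‖ := real_inner_le_norm _ _
        _ = ‖x σ - z‖ * ‖x ρ - z‖ := by rw [norm_sub_rev z (x σ), norm_sub_rev z (x ρ)]
    set s := ‖x ρ - z‖ with hs
    set t := ‖x σ - z‖ with ht
    have hspos' : 0 < s := hspos ρ hρ
    have htnn : 0 ≤ t := norm_nonneg _
    have hq : ρ * t ^ 2 + σ * s ^ 2 ≤ (σ + ρ) * (t * s) := by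
      nlinarith [hk, mul_le_mul_of_nonneg_left hCS (by linarith : (0:ℝ) ≤ σ + ρ)]
    have hst : s ≤ t := by
      by_contra hc
      push_neg at hc
      have hst1 : 0 < s - t := by linarith
      have h1 : 0 < σ * s - ρ * t := by
        nlinarith [mul_nonneg (sub_nonneg.mpr hρσ) htnn]
      nlinarith [mul_pos hst1 h1, hq]
    refine ⟨hst, ?_⟩
    rcases eq_or_lt_of_le hst with he | hlt
    · nlinarith [he, htnn, hρσ]
    · by_contra hc
      push_neg at hc
      nlinarith [mul_pos (sub_pos.mpr hlt) (sub_pos.mpr hc), hq]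
  -- Lipschitz-type bound
  have hLip : ∀ ρ σ : ℝ, 0 < ρ → 0 < σ →
      ‖x ρ - x σ‖ ≤ |σ - ρ| / ρ * ‖x ρ - z‖ := by
    intro ρ σ hρ hσ
    have hk := mono_key T hT z x hx ρ σ hρ hσ
    have h2 : (σ - ρ) * ⟪x ρ - x σ, z - x ρ⟫ ≤ |σ - ρ| * (‖x ρ - x σ‖ * ‖z - x ρ‖) := by
      calc (σ - ρ) * ⟪x ρ - x σ, z - x ρ⟫ ≤ |(σ - ρ) * ⟪x ρ - x σ, z - x ρ⟫| := le_abs_self _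
        _ = |σ - ρ| * |⟪x ρ - x σ, z - x ρ⟫| := abs_mul _ _
        _ ≤ |σ - ρ| * (‖x ρ - x σ‖ * ‖z - x ρ‖) :=
            mul_le_mul_of_nonneg_left (abs_real_inner_le_norm _ _) (abs_nonneg _)
    have hkk : ρ * ‖x ρ - x σ‖ ^ 2 ≤ |σ - ρ| * (‖x ρ - x σ‖ * ‖z - x ρ‖) := hk.trans h2
    have hnz : ‖x ρ - z‖ = ‖z - x ρ‖ := norm_sub_rev _ _
    rw [hnz]
    rcases eq_or_lt_of_le (norm_nonneg (x ρ - x σ)) with h | h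
    · rw [← h]; positivity
    · have key : ρ * ‖x ρ - x σ‖ ≤ |σ - ρ| * ‖z - x ρ‖ := by nlinarith [hkk, h]
      rw [div_mul_eq_mul_div, le_div_iff₀ hρ]
      nlinarith [key]
  -- continuity of ρ ↦ ‖x ρ - z‖
  have hconts : ContinuousOn (fun ρ => ‖x ρ - z‖) (Set.Ioi (0 : ℝ)) := by
    intro ρ0 hρ0
    have hρ0' : 0 < ρ0 := hρ0
    rw [Metric.continuousWithinAt_iff]
    intro ε hε
    set L := ‖x ρ0 - z‖ / ρ0 with hL
    have hLnn : 0 ≤ L := div_nonneg (norm_nonneg _) hρ0'.le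
    refine ⟨ε / (L + 1), by positivity, ?_⟩
    intro σ hσ hd
    have hσ' : 0 < σ := hσ
    rw [Real.dist_eq] at hd ⊢
    have h1 : |‖x σ - z‖ - ‖x ρ0 - z‖| ≤ ‖(x σ - z) - (x ρ0 - z)‖ := abs_norm_sub_norm_le _ _
    have h2 : (x σ - z) - (x ρ0 - z) = -(x ρ0 - x σ) := by abel
    have h3 : ‖x ρ0 - x σ‖ ≤ |σ - ρ0| / ρ0 * ‖x ρ0 - z‖ := hLip ρ0 σ hρ0' hσ'
    have h4 : |σ - ρ0| / ρ0 * ‖x ρ0 - z‖ = L * |σ - ρ0| := by rw [hL]; ring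
    calc |‖x σ - z‖ - ‖x ρ0 - z‖| ≤ ‖x ρ0 - x σ‖ := by rw [h2, norm_neg] at h1; exact h1
      _ ≤ L * |σ - ρ0| := by rw [← h4]; exact h3
      _ < (L + 1) * (ε / (L + 1)) := by
          have : L * |σ - ρ0| ≤ L * (ε / (L + 1)) :=
            mul_le_mul_of_nonneg_left hd.le hLnn
          have h5 : 0 < ε / (L + 1) := by positivity
          nlinarith [this, h5]
      _ = ε := by field_simp
  -- continuity of ψ
  have hcont : ContinuousOn (psiFun a b z x) (Set.Ioi (0 : ℝ)) := by
    have : psiFun a b z x = fun ρ => a * ρ ^ 2 + b * ρ + (ρ * ‖x ρ - z‖) ^ 2 := rfl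
    rw [this]
    exact ((continuousOn_const.mul ((continuous_pow 2).continuousOn)).add
      (continuousOn_const.mul continuous_id.continuousOn)).add
      ((continuous_id.continuousOn.mul hconts).pow 2)
  -- strict monotonicity of ψ
  have hstrict : StrictMonoOn (psiFun a b z x) (Set.Ioi (0 : ℝ)) := by
    intro ρ hρ σ hσ hlt
    have hρ' : (0:ℝ) < ρ := hρ
    have hσ' : (0:ℝ) < σ := hσ
    obtain ⟨h1, _⟩ := hBmono ρ σ hρ' hlt.le
    have hssσ : 0 < ‖x σ - z‖ := hspos σ hσ'
    have hmul : ρ * ‖x ρ - z‖ < σ * ‖x σ - z‖ := by nlinarith [h1, hssσ, hρ', hlt]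
    have hmulnn : 0 ≤ ρ * ‖x ρ - z‖ := by positivity
    simp only [psiFun]
    have hsq : (ρ * ‖x ρ - z‖) ^ 2 < (σ * ‖x σ - z‖) ^ 2 := by
      have := mul_self_lt_mul_self hmulnn hmul
      nlinarith [this]
    have h2 : ρ ^ 2 ≤ σ ^ 2 := by nlinarith [hρ', hlt]
    nlinarith [hsq, mul_le_mul_of_nonneg_left h2 ha, mul_le_mul_of_nonneg_left hlt.le hb]
  obtain ⟨ρ0, hρ0pos, hρ0m, hρ0p⟩ := hne
  -- small ρ with ψ ρ ≤ θm
  obtain ⟨ρ1, hρ1pos, hρ1le, hψρ1⟩ :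
      ∃ ρ1 : ℝ, 0 < ρ1 ∧ ρ1 ≤ ρ0 ∧ psiFun a b z x ρ1 ≤ θm := by
    set C := a + b + ‖x ρ0 - z‖ ^ 2 with hC
    have hCnn : 0 ≤ C := by positivity
    set ρ1 := min ρ0 (min 1 (θm / (C + 1))) with hρ1
    have hρ1pos : 0 < ρ1 := lt_min hρ0pos (lt_min one_pos (by positivity))
    have h1 : ρ1 ≤ 1 := le_trans (min_le_right _ _) (min_le_left _ _)
    have h2 : ρ1 ≤ θm / (C + 1) := le_trans (min_le_right _ _) (min_le_right _ _)
    have h3 : ρ1 ≤ ρ0 := min_le_left _ _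
    have hsle : ‖x ρ1 - z‖ ≤ ‖x ρ0 - z‖ := (hBmono ρ1 ρ0 hρ1pos h3).1
    refine ⟨ρ1, hρ1pos, h3, ?_⟩
    have hψ : psiFun a b z x ρ1 = a * ρ1 ^ 2 + b * ρ1 + (ρ1 * ‖x ρ1 - z‖) ^ 2 := rfl
    rw [hψ]
    have hsnn : 0 ≤ ‖x ρ1 - z‖ := norm_nonneg _
    have hρ1sq : ρ1 ^ 2 ≤ ρ1 := by nlinarith [hρ1pos, h1]
    have hbig : a * ρ1 ^ 2 + b * ρ1 + (ρ1 * ‖x ρ1 - z‖) ^ 2 ≤ ρ1 * C := by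
      rw [hC]
      have hs2 : ‖x ρ1 - z‖ ^ 2 ≤ ‖x ρ0 - z‖ ^ 2 := by nlinarith [hsle, hsnn]
      have ha1 : a * ρ1 ^ 2 ≤ a * ρ1 := mul_le_mul_of_nonneg_left hρ1sq ha
      have hc1 : ρ1 ^ 2 * ‖x ρ1 - z‖ ^ 2 ≤ ρ1 ^ 2 * ‖x ρ0 - z‖ ^ 2 :=
        mul_le_mul_of_nonneg_left hs2 (sq_nonneg ρ1)
      have hc2 : ρ1 ^ 2 * ‖x ρ0 - z‖ ^ 2 ≤ ρ1 * ‖x ρ0 - z‖ ^ 2 :=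
        mul_le_mul_of_nonneg_right hρ1sq (sq_nonneg _)
      nlinarith [ha1, hc1, hc2]
    have hlast : ρ1 * C ≤ θm := by
      have := mul_le_mul_of_nonneg_right h2 hCnn
      rw [div_mul_eq_mul_div] at this
      calc ρ1 * C ≤ θm * C / (C + 1) := this
        _ ≤ θm := by
            rw [div_le_iff₀ (by positivity)]
            nlinarith [hθm, hCnn]
    linarith
  -- large ρ with θp ≤ ψ ρ
  obtain ⟨ρ2, hρ2ge, hψρ2⟩ : ∃ ρ2 : ℝ, ρ0 ≤ ρ2 ∧ θp ≤ psiFun a b z x ρ2 := by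
    set ρ2 := max ρ0 (Real.sqrt θp / ‖x ρ0 - z‖) with hρ2
    have hρ2ge : ρ0 ≤ ρ2 := le_max_left _ _
    have hρ2pos : 0 < ρ2 := hρ0pos.trans_le hρ2ge
    have hs2 : ‖x ρ0 - z‖ ≤ ‖x ρ2 - z‖ := (hBmono ρ0 ρ2 hρ0pos hρ2ge).1
    have hsq : Real.sqrt θp ≤ ρ2 * ‖x ρ0 - z‖ := by
      have h0 : Real.sqrt θp / ‖x ρ0 - z‖ ≤ ρ2 := le_max_right _ _
      have h1 := mul_le_mul_of_nonneg_right h0 (hspos ρ0 hρ0pos).le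
      rwa [div_mul_cancel₀ _ (hspos ρ0 hρ0pos).ne'] at h1
    refine ⟨ρ2, hρ2ge, ?_⟩
    have hψ : psiFun a b z x ρ2 = a * ρ2 ^ 2 + b * ρ2 + (ρ2 * ‖x ρ2 - z‖) ^ 2 := rfl
    rw [hψ]
    have h5 : ρ2 * ‖x ρ0 - z‖ ≤ ρ2 * ‖x ρ2 - z‖ :=
      mul_le_mul_of_nonneg_left hs2 hρ2pos.le
    have h6 : Real.sqrt θp ^ 2 = θp := Real.sq_sqrt (le_of_lt (hθm.trans hθmp))
    nlinarith [hsq, h5, h6, Real.sqrt_nonneg θp, ha, hb, hρ2pos, sq_nonneg ρ2]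
  -- intermediate value theorem
  have hIcc1 : Set.Icc ρ1 ρ0 ⊆ Set.Ioi (0:ℝ) := fun y hy => hρ1pos.trans_le hy.1
  have hIcc2 : Set.Icc ρ0 ρ2 ⊆ Set.Ioi (0:ℝ) := fun y hy => hρ0pos.trans_le hy.1
  obtain ⟨ρm, hρmmem, hψρm⟩ :=
    intermediate_value_Icc hρ1le (hcont.mono hIcc1) (Set.mem_Icc.mpr ⟨hψρ1, hρ0m⟩)
  obtain ⟨ρp, hρpmem, hψρp⟩ :=
    intermediate_value_Icc hρ2ge (hcont.mono hIcc2) (Set.mem_Icc.mpr ⟨hρ0p, hψρ2⟩)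
  have hρmpos : 0 < ρm := hρ1pos.trans_le hρmmem.1
  have hρppos : 0 < ρp := hρ0pos.trans_le hρpmem.1
  have hρmρp : ρm ≤ ρp := hρmmem.2.trans hρpmem.1
  refine ⟨ρm, ρp, hρmpos, hρmρp, ?_, hψρm, hψρp, ?_⟩
  · ext ρ
    simp only [Set.mem_setOf_eq, Set.mem_Icc]
    constructor
    · rintro ⟨hρ, h1, h2⟩
      constructor
      · by_contra hc
        push_neg at hc
        have := hstrict (Set.mem_Ioi.mpr hρ) (Set.mem_Ioi.mpr hρmpos) hc
        rw [hψρm] at this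
        linarith
      · by_contra hc
        push_neg at hc
        have := hstrict (Set.mem_Ioi.mpr hρppos) (Set.mem_Ioi.mpr hρ) hc
        rw [hψρp] at this
        linarith
    · rintro ⟨h1, h2⟩
      have hρ : 0 < ρ := hρmpos.trans_le h1
      refine ⟨hρ, ?_, ?_⟩
      · rw [← hψρm]
        exact hstrict.monotoneOn (Set.mem_Ioi.mpr hρmpos) (Set.mem_Ioi.mpr hρ) h1
      · rw [← hψρp]
        exact hstrict.monotoneOn (Set.mem_Ioi.mpr hρ) (Set.mem_Ioi.mpr hρppos) h2
  · -- the ratio bound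
    obtain ⟨hsm, hratio⟩ := hBmono ρm ρp hρmpos hρmρp
    have h4 : θp * ρm ^ 4 ≤ θm * ρp ^ 4 := by
      rw [← hψρm, ← hψρp]
      have hψm : psiFun a b z x ρm = a * ρm ^ 2 + b * ρm + (ρm * ‖x ρm - z‖) ^ 2 := rfl
      have hψp : psiFun a b z x ρp = a * ρp ^ 2 + b * ρp + (ρp * ‖x ρp - z‖) ^ 2 := rfl
      rw [hψm, hψp]
      have hsnn : 0 ≤ ‖x ρm - z‖ := norm_nonneg _
      have hsnnp : 0 ≤ ‖x ρp - z‖ := norm_nonneg _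
      have hr2 : (ρm * ‖x ρp - z‖) ^ 2 ≤ (ρp * ‖x ρm - z‖) ^ 2 := by
        apply sq_le_sq'
        · nlinarith [hratio, mul_nonneg hρmpos.le hsnnp]
        · exact hratio
      have hmp2 : ρm ^ 2 ≤ ρp ^ 2 := by nlinarith [hρmpos, hρmρp]
      have hmp3 : ρm ^ 3 ≤ ρp ^ 3 := pow_le_pow_left₀ hρmpos.le hρmρp 3
      have hA : a * ρp ^ 2 * ρm ^ 4 ≤ a * ρm ^ 2 * ρp ^ 4 := by
        nlinarith [mul_le_mul_of_nonneg_left hmp2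
          (mul_nonneg ha (mul_nonneg (sq_nonneg ρm) (sq_nonneg ρp)))]
      have hB2 : b * ρp * ρm ^ 4 ≤ b * ρm * ρp ^ 4 := by
        nlinarith [mul_le_mul_of_nonneg_left hmp3
          (mul_nonneg hb (mul_nonneg hρmpos.le hρppos.le))]
      have hC2 : (ρp * ‖x ρp - z‖) ^ 2 * ρm ^ 4 ≤ (ρm * ‖x ρm - z‖) ^ 2 * ρp ^ 4 := by
        nlinarith [mul_le_mul_of_nonneg_left hr2
          (mul_nonneg (sq_nonneg ρm) (sq_nonneg ρp))]
      nlinarith [hA, hB2, hC2]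
    have hdiv : θp / θm ≤ (ρp / ρm) ^ 4 := by
      rw [div_pow, div_le_div_iff₀ hθm (pow_pos hρmpos 4)]
      linarith [h4]
    have hbase : (0:ℝ) ≤ θp / θm := div_nonneg (le_of_lt (hθm.trans hθmp)) hθm.le
    have heq : ((ρp / ρm) ^ 4 : ℝ) ^ ((1:ℝ)/4) = ρp / ρm := by
      rw [← Real.rpow_natCast (ρp/ρm) 4, ← Real.rpow_mul (div_nonneg hρppos.le hρmpos.le)]
      norm_num
    calc (θp / θm) ^ ((1:ℝ)/4) ≤ ((ρp / ρm) ^ 4) ^ ((1:ℝ)/4) :=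
          Real.rpow_le_rpow hbase hdiv (by norm_num)
      _ = ρp / ρm := heq
end

section
/- Let H be a real Hilbert space, T : H → Set H a monotone set-valued operator, a, b ≥ 0, and z ∈ H with 0 ∉ T(z). Assume that for every ρ > 0 there exists a unique x_ρ ∈ H with z − x_ρ ∈ ρ T(x_ρ), and define ψ(ρ) := aρ² + bρ + (ρ‖x_ρ − z‖)². Let 0 < θ₋ < θ₊ < ∞ and let ρ₋, ρ₊ > 0 satisfy ψ(ρ₋) = θ₋ and ψ(ρ₊) = θ₊. Then for any ρ > 0: (a) if ψ(ρ) < θ₋ then ρ < ρ₋ and ρ₊ ≤ ρθ₊/ψ(ρ); (b) if ψ(ρ) > θ₊ then ρθ₋/ψ(ρ) ≤ ρ₋ and ρ₊ < ρ. -/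
open scoped RealInnerProductSpace

set_option maxHeartbeats 1600000 in
/-- bracketing. With `ψ(ρ₋) = θ₋` and `ψ(ρ₊) = θ₊`, for any trial `ρ > 0`:
(a) if `ψ(ρ) < θ₋` then `ρ < ρ₋` and `ρ₊ ≤ ρθ₊/ψ(ρ)`;
(b) if `ψ(ρ) > θ₊` then `ρθ₋/ψ(ρ) ≤ ρ₋` and `ρ₊ < ρ`. -/
theorem bracketing_bounds {H : Type*} [NormedAddCommGroup H] [InnerProductSpace ℝ H]
    (T : H → Set H)
    (hT : ∀ x y u v, u ∈ T x → v ∈ T y → 0 ≤ ⟪x - y, u - v⟫)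
    (a b : ℝ) (ha : 0 ≤ a) (hb : 0 ≤ b)
    (z : H) (hz : (0 : H) ∉ T z)
    (x : ℝ → H) (hx : ∀ ρ > (0 : ℝ), ∃ v ∈ T (x ρ), z - x ρ = ρ • v)
    (hxuniq : ∀ ρ > (0 : ℝ), ∀ x' : H, (∃ v ∈ T x', z - x' = ρ • v) → x' = x ρ)
    (θm θp : ℝ) (hθm : 0 < θm) (hθmp : θm < θp)
    (ρm ρp : ℝ) (hρm : 0 < ρm) (hρp : 0 < ρp)
    (hψm : psiFun a b z x ρm = θm) (hψp : psiFun a b z x ρp = θp)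
    (ρ : ℝ) (hρ : 0 < ρ) :
    (psiFun a b z x ρ < θm → ρ < ρm ∧ ρp ≤ ρ * θp / psiFun a b z x ρ) ∧
      (θp < psiFun a b z x ρ → ρ * θm / psiFun a b z x ρ ≤ ρm ∧ ρp < ρ) := by
  -- positivity of ‖x ρ' - z‖
  have hpos : ∀ ρ' > (0:ℝ), 0 < ‖x ρ' - z‖ := by
    intro ρ' hρ'
    rcases hx ρ' hρ' with ⟨v, hv, hveq⟩
    rw [norm_pos_iff, sub_ne_zero]
    intro h
    apply hz
    rw [h, sub_self] at hveq
    rcases (smul_eq_zero.mp hveq.symm) with h1 | h2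
    · exact absurd h1 hρ'.ne'
    · rw [h2] at hv; rwa [← h]
  -- monotonicity of ρ ↦ ‖x ρ - z‖
  have hmono : ∀ ρ₁ ρ₂ : ℝ, 0 < ρ₁ → ρ₁ ≤ ρ₂ → ‖x ρ₁ - z‖ ≤ ‖x ρ₂ - z‖ := by
    intro ρ₁ ρ₂ h1 h12
    have h2 : 0 < ρ₂ := lt_of_lt_of_le h1 h12
    rcases hx ρ₁ h1 with ⟨v₁, hv₁, he₁⟩
    rcases hx ρ₂ h2 with ⟨v₂, hv₂, he₂⟩
    have key := hT (x ρ₁) (x ρ₂) v₁ v₂ hv₁ hv₂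
    have e1 : x ρ₁ = z - ρ₁ • v₁ := by rw [← he₁]; abel
    have e2 : x ρ₂ = z - ρ₂ • v₂ := by rw [← he₂]; abel
    have hx12 : x ρ₁ - x ρ₂ = ρ₂ • v₂ - ρ₁ • v₁ := by rw [e1, e2]; abel
    rw [hx12] at key
    have hexp : ⟪ρ₂ • v₂ - ρ₁ • v₁, v₁ - v₂⟫ =
        ρ₂ * ⟪v₁, v₂⟫ - ρ₂ * ‖v₂‖ ^ 2 - ρ₁ * ‖v₁‖ ^ 2 + ρ₁ * ⟪v₁, v₂⟫ := by
      simp [inner_sub_left, inner_sub_right, real_inner_smul_left,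
        real_inner_self_eq_norm_sq, real_inner_comm v₂ v₁]
      ring
    rw [hexp] at key
    have hcs : ⟪v₁, v₂⟫ ≤ ‖v₁‖ * ‖v₂‖ := real_inner_le_norm v₁ v₂
    have hn1 : ‖x ρ₁ - z‖ = ρ₁ * ‖v₁‖ := by
      rw [← norm_neg, neg_sub, he₁, norm_smul, Real.norm_of_nonneg h1.le]
    have hn2 : ‖x ρ₂ - z‖ = ρ₂ * ‖v₂‖ := by
      rw [← norm_neg, neg_sub, he₂, norm_smul, Real.norm_of_nonneg h2.le]
    rw [hn1, hn2]
    set s := ‖v₁‖ with hs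
    set t := ‖v₂‖ with ht
    have hnp : (0:ℝ) ≤ s := norm_nonneg v₁
    have hnq : (0:ℝ) ≤ t := norm_nonneg v₂
    by_contra hcon
    push_neg at hcon
    -- hcon : ρ₂ * t < ρ₁ * s
    have hA : 0 ≤ (t - s) * (ρ₁ * s - ρ₂ * t) := by
      nlinarith [mul_nonneg (by linarith : (0:ℝ) ≤ ρ₁ + ρ₂) (sub_nonneg.mpr hcs)]
    have hst : t < s := by
      nlinarith [mul_nonneg (sub_nonneg.mpr h12) hnq]
    nlinarith [mul_pos (sub_pos.mpr hst) (by linarith : (0:ℝ) < ρ₁ * s - ρ₂ * t)]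
  -- ψ is positive
  have hψpos : ∀ ρ' > (0:ℝ), 0 < psiFun a b z x ρ' := by
    intro ρ' hρ'
    have h0 := pow_pos (mul_pos hρ' (hpos ρ' hρ')) 2
    have h1' := mul_nonneg ha (sq_nonneg ρ')
    have h2' := mul_nonneg hb hρ'.le
    unfold psiFun
    linarith
  -- ψ strictly increasing on (0,∞)
  have hψmono : ∀ ρ₁ ρ₂ : ℝ, 0 < ρ₁ → ρ₁ < ρ₂ → psiFun a b z x ρ₁ < psiFun a b z x ρ₂ := by
    intro ρ₁ ρ₂ h1 h12
    have h2 : 0 < ρ₂ := h1.trans h12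
    have hn1 := hpos ρ₁ h1
    have hn2 := hpos ρ₂ h2
    have hn := hmono ρ₁ ρ₂ h1 h12.le
    have hlt : ρ₁ * ‖x ρ₁ - z‖ < ρ₂ * ‖x ρ₂ - z‖ :=
      lt_of_le_of_lt (mul_le_mul_of_nonneg_left hn h1.le)
        (mul_lt_mul_of_pos_right h12 hn2)
    have hsq : (ρ₁ * ‖x ρ₁ - z‖) ^ 2 < (ρ₂ * ‖x ρ₂ - z‖) ^ 2 :=
      pow_lt_pow_left₀ hlt (mul_nonneg h1.le hn1.le) two_ne_zero
    have ht1 : a * ρ₁ ^ 2 ≤ a * ρ₂ ^ 2 :=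
      mul_le_mul_of_nonneg_left (pow_le_pow_left₀ h1.le h12.le 2) ha
    have ht2 : b * ρ₁ ≤ b * ρ₂ := mul_le_mul_of_nonneg_left h12.le hb
    unfold psiFun
    linarith
  -- ψ(ρ)/ρ nondecreasing, in product form: ρ₂ * ψ(ρ₁) ≤ ρ₁ * ψ(ρ₂)
  have hratio : ∀ ρ₁ ρ₂ : ℝ, 0 < ρ₁ → ρ₁ ≤ ρ₂ →
      ρ₂ * psiFun a b z x ρ₁ ≤ ρ₁ * psiFun a b z x ρ₂ := by
    intro ρ₁ ρ₂ h1 h12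
    have h2 : 0 < ρ₂ := lt_of_lt_of_le h1 h12
    have hn1 := hpos ρ₁ h1
    have hn := hmono ρ₁ ρ₂ h1 h12
    have h4 : ρ₁ * ‖x ρ₁ - z‖ ^ 2 ≤ ρ₂ * ‖x ρ₂ - z‖ ^ 2 := by
      nlinarith [mul_self_le_mul_self hn1.le hn]
    have t1 : 0 ≤ a * (ρ₁ * ρ₂) * (ρ₂ - ρ₁) :=
      mul_nonneg (mul_nonneg ha (mul_pos h1 h2).le) (sub_nonneg.mpr h12)
    have t2 : 0 ≤ (ρ₁ * ρ₂) * (ρ₂ * ‖x ρ₂ - z‖ ^ 2 - ρ₁ * ‖x ρ₁ - z‖ ^ 2) :=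
      mul_nonneg (mul_pos h1 h2).le (sub_nonneg.mpr h4)
    unfold psiFun
    linarith [t1, t2]
  have hρmp : ρm < ρp := by
    by_contra hc
    push_neg at hc
    rcases eq_or_lt_of_le hc with he | hlt
    · rw [he] at hψp
      rw [hψm] at hψp
      linarith
    · have := hψmono ρp ρm hρp hlt
      rw [hψm, hψp] at this
      linarith
  have hψρ := hψpos ρ hρ
  constructor
  · intro hlt
    have hρρm : ρ < ρm := by
      by_contra hc
      push_neg at hc
      rcases eq_or_lt_of_le hc with he | hlt2
      · rw [← he, hψm] at hlt; linarith
      · have := hψmono ρm ρ hρm hlt2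
        rw [hψm] at this
        linarith
    refine ⟨hρρm, ?_⟩
    have hρρp : ρ ≤ ρp := (hρρm.trans hρmp).le
    have := hratio ρ ρp hρ hρρp
    rw [hψp] at this
    rw [le_div_iff₀ hψρ]
    linarith
  · intro hgt
    have hρρp : ρp < ρ := by
      by_contra hc
      push_neg at hc
      rcases eq_or_lt_of_le hc with he | hlt2
      · rw [he, hψp] at hgt; linarith
      · have := hψmono ρ ρp hρ hlt2
        rw [hψp] at this
        linarith
    refine ⟨?_, hρρp⟩
    have hρmρ : ρm ≤ ρ := (hρmp.trans hρρp).le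
    have := hratio ρm ρ hρm hρmρ
    rw [hψm] at this
    rw [div_le_iff₀ hψρ]
    linarith
end
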